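/- For every critical pair s ≈ t of the transformed TRS R̄ there exist a constrained critical pair s′ ≈ t′ [φ′] of the LCTRS R and a substitution γ such that s = s′γ, t = t′γ and γ ⊨ φ′. -/

import Mathlib

namespace LCT

/-! ### First-order terms over signature `F` with natural-number variables -/

inductive Term (F : Type) : Type
  | var : ℕ → Term F
  | app : F → List (Term F) → Term F

instance {F : Type} : Inhabited (Term F) := ⟨Term.var 0⟩

namespace Term

variable {F : Type}

/-- Application of a substitution (total map from variables to terms). -/
def subst (σ : ℕ → Term F) : Term F → Term F
  | var x => σ x
  | app f ts => app f (ts.attach.map fun ⟨t, _⟩ => subst σ t)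

/-- The list of (occurrences of) variables of a term. -/
def varsList : Term F → List ℕ
  | var x => [x]
  | app _ ts => (ts.attach.map fun ⟨t, _⟩ => varsList t).flatten

/-- The set of variables of a term. -/
def vars (t : Term F) : Set ℕ := {x | x ∈ t.varsList}

/-- Number of occurrences of the variable `x` in a term. -/
def count (x : ℕ) : Term F → ℕ
  | var y => if y = x then 1 else 0
  | app _ ts => (ts.attach.map fun ⟨t, _⟩ => count x t).sum

/-- The subterm at a position (a position is a list of argument indices). -/
def subtermAt : Term F → List ℕ → Option (Term F)
  | t, [] => some t
  | var _, _ :: _ => none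
  | app _ ts, i :: p => match ts[i]? with
    | some t => subtermAt t p
    | none => none

/-- Replacement of the subterm at a position. -/
def replaceAt : Term F → List ℕ → Term F → Option (Term F)
  | _, [], u => some u
  | var _, _ :: _, _ => none
  | app f ts, i :: p, u => match ts[i]? with
    | some t => match replaceAt t p u with
      | some t' => some (app f (ts.set i t'))
      | none => none
    | none => none

/-- Renaming of variables. -/
def rename (π : ℕ → ℕ) (t : Term F) : Term F := t.subst (fun x => var (π x))

/-- The term is not a variable (i.e. its root is a function symbol). -/
def isFun : Term F → Prop
  | var _ => False
  | app _ _ => True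

end Term

/-- Simultaneous replacement at a list of (parallel) positions. -/
def replaceAll {F : Type} : Term F → List (List ℕ × Term F) → Option (Term F)
  | t, [] => some t
  | t, (p, u) :: rest => match t.replaceAt p u with
    | some t' => replaceAll t' rest
    | none => none

/-- Two positions are parallel if neither is a prefix of the other. -/
def ParallelPos (p q : List ℕ) : Prop := ¬ p <+: q ∧ ¬ q <+: p

/-- Prefix every position in the `i`-th member of `Qs` with `i` and collect the results. -/
def posJoin (Qs : List (List (List ℕ))) : List (List ℕ) :=
  (((List.range Qs.length).zip Qs).map fun iq => iq.2.map (iq.1 :: ·)).flatten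

/-- The domain of a substitution. -/
def Dom {F : Type} (σ : ℕ → Term F) : Set ℕ := {x | σ x ≠ Term.var x}

/-! ### Abstract rewriting notions -/

/-- Confluence of an abstract relation. -/
def Confluent {α : Type*} (r : α → α → Prop) : Prop :=
  ∀ s t u, Relation.ReflTransGen r s t → Relation.ReflTransGen r s u →
    ∃ v, Relation.ReflTransGen r t v ∧ Relation.ReflTransGen r u v

/-- Local confluence of an abstract relation. -/
def LocallyConfluent {α : Type*} (r : α → α → Prop) : Prop :=
  ∀ s t u, r s t → r s u →
    ∃ v, Relation.ReflTransGen r t v ∧ Relation.ReflTransGen r u v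

/-- Composition of relations. -/
def Comp {α : Type*} (r s : α → α → Prop) : α → α → Prop := fun a c => ∃ b, r a b ∧ s b c

/-! ### Constrained rewrite rules and LCTRSs -/

/-- A constrained rewrite rule `ℓ → r [φ]`. -/
structure Rule (F : Type) where
  lhs : Term F
  rhs : Term F
  cond : Term F

/-- The logical variables `LVar(ρ) = Var(φ) ∪ (Var(r) ∖ Var(ℓ))` of a rule. -/
def LVar {F : Type} (ρ : Rule F) : Set ℕ := ρ.cond.vars ∪ (ρ.rhs.vars \ ρ.lhs.vars)

/-- `EVar(ρ) = Var(r) ∖ (Var(ℓ) ∪ Var(φ))`, as a list. -/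
def EVarList {F : Type} (ρ : Rule F) : List ℕ :=
  ρ.rhs.varsList.filter fun x => !(ρ.lhs.varsList.contains x || ρ.cond.varsList.contains x)

/-- All variables of a rule. -/
def ruleVars {F : Type} (ρ : Rule F) : Set ℕ := ρ.lhs.vars ∪ ρ.rhs.vars ∪ ρ.cond.vars

/-- Terms all of whose function symbols are theory symbols (logical terms). -/
inductive IsLogical {F : Type} (Fth : Set F) : Term F → Prop
  | var (x : ℕ) : IsLogical Fth (.var x)
  | app {f ts} : f ∈ Fth → (∀ t ∈ ts, IsLogical Fth t) → IsLogical Fth (.app f ts)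

/-- A logically constrained term rewrite system (data part): a signature split into
term symbols `Fte` and theory symbols `Fth` with value constants `Val`, an arity
function, an interpretation `J` of ground logical terms, distinguished symbols
`tt` (the truth value ⊤), `andS` (conjunction) and `eqS` (equality), and a set
of constrained rewrite rules. -/
structure LCTRS (F : Type) where
  Fte : Set F
  Fth : Set F
  Val : Set F
  arity : F → ℕ
  J : Term F → F
  tt : F
  andS : F
  eqS : F
  rules : Set (Rule F)

namespace LCTRS

variable {F : Type}

/-- The term `t` is a value. -/
def isVal (R : LCTRS F) (t : Term F) : Prop := ∃ v ∈ R.Val, t = Term.app v []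

/-- `γ` assigns values to all variables in `S`. -/
def valAssign (R : LCTRS F) (S : Set ℕ) (γ : ℕ → Term F) : Prop := ∀ x ∈ S, R.isVal (γ x)

/-- A ground term (no variables). -/
def Ground (t : Term F) : Prop := t.varsList = []

/-- Validity of a constraint: `J(φγ) = ⊤` for every assignment of values to its variables. -/
def validC (R : LCTRS F) (φ : Term F) : Prop :=
  ∀ γ, R.valAssign φ.vars γ → R.J (φ.subst γ) = R.tt

/-- Satisfiability of a constraint. -/
def satC (R : LCTRS F) (φ : Term F) : Prop :=
  ∃ γ, R.valAssign φ.vars γ ∧ R.J (φ.subst γ) = R.tt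

/-- `γ ⊨ φ`: the substitution `γ` respects the constraint `φ`. -/
def respectsC (R : LCTRS F) (γ : ℕ → Term F) (φ : Term F) : Prop :=
  R.valAssign φ.vars γ ∧ R.validC (φ.subst γ)

/-- `σ ⊨ ρ`: the substitution `σ` respects the constrained rule `ρ`. -/
def respectsRule (R : LCTRS F) (σ : ℕ → Term F) (ρ : Rule F) : Prop :=
  Dom σ = ρ.lhs.vars ∪ ρ.rhs.vars ∪ ρ.cond.vars ∧
  (∀ x ∈ LVar ρ, R.isVal (σ x)) ∧ R.validC (ρ.cond.subst σ)

/-- Validity of the implication `φ ⇒ ψ`. -/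
def validImp (R : LCTRS F) (φ ψ : Term F) : Prop :=
  ∀ γ, R.valAssign (φ.vars ∪ ψ.vars) γ → R.J (φ.subst γ) = R.tt → R.J (ψ.subst γ) = R.tt

/-- The calculation rule `f(x₁,…,xₙ) → y [y = f(x₁,…,xₙ)]` for a theory symbol `f`. -/
def calcRule (R : LCTRS F) (f : F) : Rule F :=
  let xs : List (Term F) := (List.range (R.arity f)).map Term.var
  ⟨Term.app f xs, Term.var (R.arity f),
    Term.app R.eqS [Term.var (R.arity f), Term.app f xs]⟩

/-- `R_rc`: the rules of `R` together with all calculation rules. -/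
def Rrc (R : LCTRS F) : Set (Rule F) :=
  R.rules ∪ {ρ | ∃ f ∈ R.Fth \ R.Val, ρ = R.calcRule f}

/-- The conjunction `a ∧ b` as a logical term. -/
def conj (R : LCTRS F) (a b : Term F) : Term F := Term.app R.andS [a, b]

/-- The truth constant `⊤` as a logical term. -/
def trueT (R : LCTRS F) : Term F := Term.app R.tt []

/-- Conjunction of a list of constraints. -/
def bigConj (R : LCTRS F) (l : List (Term F)) : Term F := l.foldr R.conj R.trueT

/-- `EC_ρ`: the conjunction of `x = x` for all `x ∈ EVar(ρ)`. -/
def EC (R : LCTRS F) (ρ : Rule F) : Term F :=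
  R.bigConj ((EVarList ρ).map fun x => Term.app R.eqS [Term.var x, Term.var x])

/-- Well-formedness of an LCTRS: the axioms on the signature, values,
interpretation, the distinguished logical symbols, and the rules. -/
def WF (R : LCTRS F) : Prop :=
  R.Val ⊆ R.Fth ∧ R.Fte ∩ R.Fth ⊆ R.Val ∧ (∀ ι ∈ R.Val, R.arity ι = 0) ∧
  (∀ t, R.J t ∈ R.Val) ∧ (∀ v ∈ R.Val, R.J (Term.app v []) = v) ∧
  R.tt ∈ R.Val ∧ R.andS ∈ R.Fth \ R.Val ∧ R.arity R.andS = 2 ∧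
  R.eqS ∈ R.Fth \ R.Val ∧ R.arity R.eqS = 2 ∧
  (∀ a b : Term F, IsLogical R.Fth a → IsLogical R.Fth b → Ground a → Ground b →
    (R.J (R.conj a b) = R.tt ↔ (R.J a = R.tt ∧ R.J b = R.tt))) ∧
  (∀ a b : Term F, IsLogical R.Fth a → IsLogical R.Fth b → Ground a → Ground b →
    (R.J (Term.app R.eqS [a, b]) = R.tt ↔ R.J a = R.J b)) ∧
  (∀ ρ ∈ R.rules, (∃ f ts, ρ.lhs = Term.app f ts ∧ f ∈ R.Fte \ R.Fth) ∧
    IsLogical R.Fth ρ.cond)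

/-! ### Rewriting induced by an LCTRS -/

/-- One rewrite step at position `p`. -/
def rstepAt (R : LCTRS F) (p : List ℕ) (s t : Term F) : Prop :=
  ∃ ρ ∈ R.Rrc, ∃ σ, R.respectsRule σ ρ ∧
    s.subtermAt p = some (ρ.lhs.subst σ) ∧ s.replaceAt p (ρ.rhs.subst σ) = some t

/-- The rewrite relation `→_R`. -/
def rstep (R : LCTRS F) (s t : Term F) : Prop := ∃ p, R.rstepAt p s t

/-- A rewrite step at a position below (or equal to) `q`. -/
def rstepGe (R : LCTRS F) (q : List ℕ) (s t : Term F) : Prop :=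
  ∃ p, q <+: p ∧ R.rstepAt p s t

end LCTRS

/-! ### TRSs (unconstrained term rewrite systems) -/

/-- A TRS is a set of rules, i.e. pairs of terms. -/
abbrev TRS (F : Type) := Set (Term F × Term F)

/-- One rewrite step of a TRS at position `p`. -/
def tstepAt {F : Type} (S : TRS F) (p : List ℕ) (s t : Term F) : Prop :=
  ∃ lr ∈ S, ∃ σ : ℕ → Term F,
    s.subtermAt p = some (lr.1.subst σ) ∧ s.replaceAt p (lr.2.subst σ) = some t

/-- The rewrite relation of a TRS. -/
def tstep {F : Type} (S : TRS F) (s t : Term F) : Prop := ∃ p, tstepAt S p s t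

/-- A TRS is left-linear if no variable occurs twice in a left-hand side. -/
def LeftLinearTRS {F : Type} (S : TRS F) : Prop := ∀ lr ∈ S, ∀ x, lr.1.count x ≤ 1

/-! ### The transformed TRS `R̄` of an LCTRS -/

/-- The TRS `R̄`: all value instances `ℓτ → rτ` of constrained rules, together with
the calculation instances `f(v₁,…,vₙ) → J(f(v₁,…,vₙ))`. -/
def barTRS {F : Type} (R : LCTRS F) : TRS F :=
  {lr | ∃ ρ ∈ R.rules, ∃ τ : ℕ → Term F, Dom τ = LVar ρ ∧
      (∀ x ∈ LVar ρ, R.isVal (τ x)) ∧ R.validC (ρ.cond.subst τ) ∧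
      lr = (ρ.lhs.subst τ, ρ.rhs.subst τ)} ∪
  {lr | ∃ f ∈ R.Fth \ R.Val, ∃ vs : List F, vs.length = R.arity f ∧
      (∀ v ∈ vs, v ∈ R.Val) ∧
      lr = (Term.app f (vs.map fun v => Term.app v []),
            Term.app (R.J (Term.app f (vs.map fun v => Term.app v []))) [])}

/-! ### Generic multi-steps and parallel steps -/

/-- Generic multi-step relation over a set of constrained rules with a side
condition `Cond` on the rule and the matching substitution. -/
inductive MStepG {F : Type} (Rules : Set (Rule F)) (Cond : Rule F → (ℕ → Term F) → Prop) :
    Term F → Term F → Prop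
  | var (x : ℕ) : MStepG Rules Cond (.var x) (.var x)
  | app {f : F} {ss ts : List (Term F)} :
      List.Forall₂ (MStepG Rules Cond) ss ts → MStepG Rules Cond (.app f ss) (.app f ts)
  | rule {ρ : Rule F} {σ τ : ℕ → Term F} :
      ρ ∈ Rules → Cond ρ σ → (∀ x, MStepG Rules Cond (σ x) (τ x)) →
      MStepG Rules Cond (ρ.lhs.subst σ) (ρ.rhs.subst τ)

mutual
/-- Generic parallel rewriting, annotated with the list of (parallel) positions of
the contracted redexes; `Root` is the root-step relation. -/
inductive ParP {F : Type} (Root : Term F → Term F → Prop) :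
    List (List ℕ) → Term F → Term F → Prop
  | var (x : ℕ) : ParP Root [] (.var x) (.var x)
  | app {f : F} {Qs ss ts} : ParPs Root Qs ss ts →
      ParP Root (posJoin Qs) (.app f ss) (.app f ts)
  | rule {s t : Term F} : Root s t → ParP Root [[]] s t

inductive ParPs {F : Type} (Root : Term F → Term F → Prop) :
    List (List (List ℕ)) → List (Term F) → List (Term F) → Prop
  | nil : ParPs Root [] [] []
  | cons {Q s t Qs ss ts} : ParP Root Q s t → ParPs Root Qs ss ts →
      ParPs Root (Q :: Qs) (s :: ss) (t :: ts)
end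

/-- Root steps of a TRS. -/
def trootStep {F : Type} (S : TRS F) (s t : Term F) : Prop :=
  ∃ lr ∈ S, ∃ σ : ℕ → Term F, s = lr.1.subst σ ∧ t = lr.2.subst σ

/-- The parallel rewrite relation `⇉^Q` of a TRS. -/
def tparQ {F : Type} (S : TRS F) (Q : List (List ℕ)) : Term F → Term F → Prop :=
  ParP (trootStep S) Q

/-- The parallel rewrite relation `⇉` of a TRS. -/
def tpar {F : Type} (S : TRS F) (s t : Term F) : Prop := ∃ Q, tparQ S Q s t

/-- The multi-step relation `⊸→` of a TRS. -/
def tmstep {F : Type} (S : TRS F) : Term F → Term F → Prop :=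
  MStepG {ρ : Rule F | (ρ.lhs, ρ.rhs) ∈ S} (fun _ _ => True)

namespace LCTRS

variable {F : Type}

/-- Root steps of an LCTRS (on unconstrained terms). -/
def lrootStep (R : LCTRS F) (s t : Term F) : Prop :=
  ∃ ρ ∈ R.Rrc, ∃ σ, R.respectsRule σ ρ ∧ s = ρ.lhs.subst σ ∧ t = ρ.rhs.subst σ

/-- The parallel rewrite relation `⇉^Q` of an LCTRS on terms. -/
def lparQ (R : LCTRS F) (Q : List (List ℕ)) : Term F → Term F → Prop :=
  ParP R.lrootStep Q

/-- The parallel rewrite relation `⇉` of an LCTRS on terms. -/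
def lpar (R : LCTRS F) (s t : Term F) : Prop := ∃ Q, R.lparQ Q s t

/-- The multi-step relation `⊸→` of an LCTRS on terms. -/
def lmstep (R : LCTRS F) : Term F → Term F → Prop :=
  MStepG R.Rrc (fun ρ σ => R.respectsRule σ ρ)

/-! ### Constrained terms and rewriting on them -/

/-- Side condition for rewriting a constrained term with constraint `φ` using
rule `ρ` and substitution `σ`: `σ(x) ∈ Val ∪ Var(φ)` for logical variables,
`φ` is satisfiable and `φ ⇒ ψσ` is valid. -/
def ccond (R : LCTRS F) (φ : Term F) (ρ : Rule F) (σ : ℕ → Term F) : Prop :=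
  (∀ x ∈ LVar ρ, R.isVal (σ x) ∨ ∃ y ∈ φ.vars, σ x = Term.var y) ∧
  R.satC φ ∧ R.validImp φ (ρ.cond.subst σ)

/-- One step on a constrained term (the constraint `φ` is left unchanged) at position `p`. -/
def cstepAt (R : LCTRS F) (φ : Term F) (p : List ℕ) (s t : Term F) : Prop :=
  ∃ ρ ∈ R.Rrc, ∃ σ, R.ccond φ ρ σ ∧
    s.subtermAt p = some (ρ.lhs.subst σ) ∧ s.replaceAt p (ρ.rhs.subst σ) = some t

/-- A step on a constrained term at a position below (or equal to) `q`. -/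
def cstepGe (R : LCTRS F) (φ : Term F) (q : List ℕ) (s t : Term F) : Prop :=
  ∃ p, q <+: p ∧ R.cstepAt φ p s t

/-- Root steps on constrained terms with constraint `φ`. -/
def crootStep (R : LCTRS F) (φ : Term F) (s t : Term F) : Prop :=
  ∃ ρ ∈ R.Rrc, ∃ σ, R.ccond φ ρ σ ∧ s = ρ.lhs.subst σ ∧ t = ρ.rhs.subst σ

/-- The parallel relation `⇉^Q` on constrained terms (constraint unchanged). -/
def cparQ (R : LCTRS F) (φ : Term F) (Q : List (List ℕ)) : Term F → Term F → Prop :=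
  ParP (R.crootStep φ) Q

/-- The multi-step relation `⊸→` on constrained terms (constraint unchanged). -/
def cmstep (R : LCTRS F) (φ : Term F) : Term F → Term F → Prop :=
  MStepG R.Rrc (R.ccond φ)

/-- Equivalence `∼` of constrained terms (domains restricted to the constraint variables). -/
def simTerm (R : LCTRS F) (s φ t ψ : Term F) : Prop :=
  (∀ γ, R.respectsC γ φ → Dom γ = φ.vars →
    ∃ δ, R.respectsC δ ψ ∧ Dom δ = ψ.vars ∧ s.subst γ = t.subst δ) ∧
  (∀ δ, R.respectsC δ ψ → Dom δ = ψ.vars →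
    ∃ γ, R.respectsC γ φ ∧ Dom γ = φ.vars ∧ s.subst γ = t.subst δ)

/-- The equivalence `∼′` of constrained terms (unrestricted domains). -/
def simTerm' (R : LCTRS F) (s φ t ψ : Term F) : Prop :=
  (∀ γ, R.respectsC γ φ → ∃ δ, R.respectsC δ ψ ∧ s.subst γ = t.subst δ) ∧
  (∀ δ, R.respectsC δ ψ → ∃ γ, R.respectsC γ φ ∧ s.subst γ = t.subst δ)

end LCTRS

/-- A constrained pair `s ≈ t [φ]` (the constrained term with binary root `≈`). -/
abbrev CPair (F : Type) := Term F × Term F × Term F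

namespace LCTRS

variable {F : Type}

/-- Equivalence `∼` on constrained pairs `s ≈ t [φ]`. -/
def simPair (R : LCTRS F) (a b : CPair F) : Prop :=
  (∀ γ, R.respectsC γ a.2.2 → Dom γ = a.2.2.vars →
    ∃ δ, R.respectsC δ b.2.2 ∧ Dom δ = b.2.2.vars ∧
      a.1.subst γ = b.1.subst δ ∧ a.2.1.subst γ = b.2.1.subst δ) ∧
  (∀ δ, R.respectsC δ b.2.2 → Dom δ = b.2.2.vars →
    ∃ γ, R.respectsC γ a.2.2 ∧ Dom γ = a.2.2.vars ∧
      a.1.subst γ = b.1.subst δ ∧ a.2.1.subst γ = b.2.1.subst δ)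

/-- A raw rewrite step on the pair inside the first component, below position `1·q`. -/
def rawStepFstGe (R : LCTRS F) (q : List ℕ) (a b : CPair F) : Prop :=
  b.2.2 = a.2.2 ∧ b.2.1 = a.2.1 ∧ R.cstepGe a.2.2 q a.1 b.1

/-- A raw rewrite step on the pair inside the second component, below position `2·q`. -/
def rawStepSndGe (R : LCTRS F) (q : List ℕ) (a b : CPair F) : Prop :=
  b.2.2 = a.2.2 ∧ b.1 = a.1 ∧ R.cstepGe a.2.2 q a.2.1 b.2.1

/-- `~→_{≥1q}` on constrained pairs (`∼ · → · ∼`, step in the first component). -/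
def sstepFstGe (R : LCTRS F) (q : List ℕ) : CPair F → CPair F → Prop :=
  Comp R.simPair (Comp (R.rawStepFstGe q) R.simPair)

/-- `~→_{≥2q}` on constrained pairs (`∼ · → · ∼`, step in the second component). -/
def sstepSndGe (R : LCTRS F) (q : List ℕ) : CPair F → CPair F → Prop :=
  Comp R.simPair (Comp (R.rawStepSndGe q) R.simPair)

/-- A raw multi-step on the pair inside the first component. -/
def rawMStepFst (R : LCTRS F) (a b : CPair F) : Prop :=
  b.2.2 = a.2.2 ∧ b.2.1 = a.2.1 ∧ R.cmstep a.2.2 a.1 b.1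

/-- `~⊸→_{≥1}` on constrained pairs. -/
def smstepFst (R : LCTRS F) : CPair F → CPair F → Prop :=
  Comp R.simPair (Comp R.rawMStepFst R.simPair)

/-- A raw parallel step `⇉^P` on the pair inside the first component. -/
def rawParFst (R : LCTRS F) (P : List (List ℕ)) (a b : CPair F) : Prop :=
  b.2.2 = a.2.2 ∧ b.2.1 = a.2.1 ∧ R.cparQ a.2.2 P a.1 b.1

/-- A raw parallel step `⇉^Q` on the pair inside the second component. -/
def rawParSnd (R : LCTRS F) (Q : List (List ℕ)) (a b : CPair F) : Prop :=
  b.2.2 = a.2.2 ∧ b.1 = a.1 ∧ R.cparQ a.2.2 Q a.2.1 b.2.1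

/-- `~⇉_{≥1}^P` on constrained pairs. -/
def sparFst (R : LCTRS F) (P : List (List ℕ)) : CPair F → CPair F → Prop :=
  Comp R.simPair (Comp (R.rawParFst P) R.simPair)

/-- `~⇉_{≥2}^Q` on constrained pairs. -/
def sparSnd (R : LCTRS F) (Q : List (List ℕ)) : CPair F → CPair F → Prop :=
  Comp R.simPair (Comp (R.rawParSnd Q) R.simPair)

/-- A constrained pair `u ≈ v [ψ]` is trivial if `uσ = vσ` for every `σ ⊨ ψ`. -/
def TrivialC (R : LCTRS F) (u v ψ : Term F) : Prop :=
  ∀ σ, R.respectsC σ ψ → u.subst σ = v.subst σ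

end LCTRS

/-! ### Unification, variants, critical pairs -/

/-- `σ` unifies `s` and `t`. -/
def Unifies {F : Type} (σ : ℕ → Term F) (s t : Term F) : Prop := s.subst σ = t.subst σ

/-- `σ` is a most general unifier of `s` and `t`. -/
def IsMGU {F : Type} (σ : ℕ → Term F) (s t : Term F) : Prop :=
  Unifies σ s t ∧ ∀ θ, Unifies θ s t → ∃ δ, ∀ x, (σ x).subst δ = θ x

/-- `(ℓ₂, r₂)` is a variant (bijective renaming) of `(ℓ₁, r₁)`. -/
def IsVariantP {F : Type} (a b : Term F × Term F) : Prop :=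
  ∃ π : ℕ ≃ ℕ, b.1 = a.1.rename π ∧ b.2 = a.2.rename π

/-- `ρ₂` is a variant (bijective renaming) of the constrained rule `ρ₁`. -/
def IsVariantR {F : Type} (a b : Rule F) : Prop :=
  ∃ π : ℕ ≃ ℕ, b.lhs = a.lhs.rename π ∧ b.rhs = a.rhs.rename π ∧ b.cond = a.cond.rename π

/-- `s ≈ t` is a critical pair of the TRS `S` obtained from an overlap at position `p`. -/
def IsCPAt {F : Type} (S : TRS F) (p : List ℕ) (s t : Term F) : Prop :=
  ∃ (l₁ r₁ l₂ r₂ : Term F) (σ : ℕ → Term F) (l2p : Term F),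
    (∃ lr ∈ S, IsVariantP lr (l₁, r₁)) ∧
    (∃ lr ∈ S, IsVariantP lr (l₂, r₂)) ∧
    (l₁.vars ∪ r₁.vars) ∩ (l₂.vars ∪ r₂.vars) = ∅ ∧
    l₂.subtermAt p = some l2p ∧ l2p.isFun ∧
    IsMGU σ l₁ l2p ∧
    (p = [] → ¬ IsVariantP (l₁, r₁) (l₂, r₂)) ∧
    (l₂.subst σ).replaceAt p (r₁.subst σ) = some s ∧
    t = r₂.subst σ

/-- `s ≈ t [φc]` is a constrained critical pair of the LCTRS `R` obtained from an
overlap at position `p`. -/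
def IsCCPAt {F : Type} (R : LCTRS F) (p : List ℕ) (s t φc : Term F) : Prop :=
  ∃ (ρ₁ ρ₂ : Rule F) (σ : ℕ → Term F) (l2p : Term F),
    (∃ ρ ∈ R.Rrc, IsVariantR ρ ρ₁) ∧
    (∃ ρ ∈ R.Rrc, IsVariantR ρ ρ₂) ∧
    ruleVars ρ₁ ∩ ruleVars ρ₂ = ∅ ∧
    ρ₂.lhs.subtermAt p = some l2p ∧ l2p.isFun ∧
    IsMGU σ ρ₁.lhs l2p ∧
    (∀ x ∈ LVar ρ₁ ∪ LVar ρ₂, R.isVal (σ x) ∨ ∃ y, σ x = Term.var y) ∧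
    R.satC (R.conj (ρ₁.cond.subst σ) (ρ₂.cond.subst σ)) ∧
    (p = [] → ¬ IsVariantR ρ₁ ρ₂ ∨ ¬ (ρ₁.rhs.vars ⊆ ρ₁.lhs.vars)) ∧
    (ρ₂.lhs.subst σ).replaceAt p (ρ₁.rhs.subst σ) = some s ∧
    t = ρ₂.rhs.subst σ ∧
    φc = R.conj (ρ₁.cond.subst σ)
           (R.conj (ρ₂.cond.subst σ) ((R.conj (R.EC ρ₁) (R.EC ρ₂)).subst σ))

/-- `s ≈ t` is a parallel critical pair of the TRS `S`: `Ps` is the list of parallel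
overlap positions and `lsig` is the instantiated left-hand side `ℓσ`. -/
def IsPCP {F : Type} (S : TRS F) (Ps : List (List ℕ)) (lsig s t : Term F) : Prop :=
  ∃ (l r : Term F) (prs : List (List ℕ × Term F × Term F)) (σ : ℕ → Term F),
    Ps = prs.map (·.1) ∧ Ps ≠ [] ∧ Ps.Pairwise ParallelPos ∧
    (∃ lr ∈ S, IsVariantP lr (l, r)) ∧
    (∀ pr ∈ prs, ∃ lr ∈ S, IsVariantP lr pr.2) ∧
    prs.Pairwise (fun a b =>
      (a.2.1.vars ∪ a.2.2.vars) ∩ (b.2.1.vars ∪ b.2.2.vars) = ∅) ∧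
    (∀ pr ∈ prs, (l.vars ∪ r.vars) ∩ (pr.2.1.vars ∪ pr.2.2.vars) = ∅) ∧
    (∀ pr ∈ prs, ∃ u, l.subtermAt pr.1 = some u ∧ u.isFun) ∧
    (∀ pr ∈ prs, ∀ u, l.subtermAt pr.1 = some u → Unifies σ pr.2.1 u) ∧
    (∀ θ : ℕ → Term F, (∀ pr ∈ prs, ∀ u, l.subtermAt pr.1 = some u → Unifies θ pr.2.1 u) →
      ∃ δ, ∀ x, (σ x).subst δ = θ x) ∧
    (∀ lp rp, prs = [([], lp, rp)] → ¬ IsVariantP (lp, rp) (l, r)) ∧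
    lsig = l.subst σ ∧
    replaceAll lsig (prs.map fun pr => (pr.1, pr.2.2.subst σ)) = some s ∧
    t = r.subst σ

/-- `s ≈ t [Φ]` is a constrained parallel critical pair of the LCTRS `R`: `Ps` is the
list of parallel overlap positions and `lsig` is the instantiated left-hand side `ℓσ`. -/
def IsCPCP {F : Type} (R : LCTRS F) (Ps : List (List ℕ)) (lsig s t Φ : Term F) : Prop :=
  ∃ (ρ : Rule F) (prs : List (List ℕ × Rule F)) (σ : ℕ → Term F),
    Ps = prs.map (·.1) ∧ Ps ≠ [] ∧ Ps.Pairwise ParallelPos ∧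
    (∃ ρ' ∈ R.Rrc, IsVariantR ρ' ρ) ∧
    (∀ pr ∈ prs, ∃ ρ' ∈ R.Rrc, IsVariantR ρ' pr.2) ∧
    prs.Pairwise (fun a b => ruleVars a.2 ∩ ruleVars b.2 = ∅) ∧
    (∀ pr ∈ prs, ruleVars ρ ∩ ruleVars pr.2 = ∅) ∧
    (∀ pr ∈ prs, ∃ u, ρ.lhs.subtermAt pr.1 = some u ∧ u.isFun) ∧
    (∀ pr ∈ prs, ∀ u, ρ.lhs.subtermAt pr.1 = some u → Unifies σ pr.2.lhs u) ∧
    (∀ θ : ℕ → Term F,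
      (∀ pr ∈ prs, ∀ u, ρ.lhs.subtermAt pr.1 = some u → Unifies θ pr.2.lhs u) →
      ∃ δ, ∀ x, (σ x).subst δ = θ x) ∧
    (∀ x, (x ∈ LVar ρ ∨ ∃ pr ∈ prs, x ∈ LVar pr.2) →
      R.isVal (σ x) ∨ ∃ y, σ x = Term.var y) ∧
    R.satC (R.conj (ρ.cond.subst σ) (R.bigConj (prs.map fun pr => pr.2.cond.subst σ))) ∧
    (∀ ρε, prs = [([], ρε)] → ¬ IsVariantR ρε ρ ∨ ¬ (ρ.rhs.vars ⊆ ρ.lhs.vars)) ∧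
    lsig = ρ.lhs.subst σ ∧
    replaceAll lsig (prs.map fun pr => (pr.1, pr.2.rhs.subst σ)) = some s ∧
    t = ρ.rhs.subst σ ∧
    Φ = R.conj (ρ.cond.subst σ)
          (R.conj ((R.conj (R.EC ρ) (R.bigConj (prs.map fun pr => R.EC pr.2))).subst σ)
            (R.bigConj (prs.map fun pr => pr.2.cond.subst σ)))

/-- `Var(t, P)`: the variables occurring in subterms of `t` at positions in `P`. -/
def VarsBelow {F : Type} (t : Term F) (P : List (List ℕ)) : Set ℕ :=
  {x | ∃ p ∈ P, ∃ u, t.subtermAt p = some u ∧ x ∈ u.vars}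

/-- `TVar(t, φ, P)`: the non-logical variables (w.r.t. `φ`) in subterms of `t` at
positions in `P`. -/
def TVarsBelow {F : Type} (t φ : Term F) (P : List (List ℕ)) : Set ℕ :=
  {x | ∃ p ∈ P, ∃ u, t.subtermAt p = some u ∧ x ∈ u.vars ∧ x ∉ φ.vars}

/-! ### Closedness conditions -/

namespace LCTRS

variable {F : Type}

/-- A constrained critical pair `s ≈ t [φ]` is development closed. -/
def DevClosedC (R : LCTRS F) (s t φ : Term F) : Prop :=
  ∃ u v ψ, R.smstepFst (s, t, φ) (u, v, ψ) ∧ R.TrivialC u v ψ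

/-- A constrained critical pair (from an overlap at position `p`) is almost
development closed. -/
def AlmostDevClosedC (R : LCTRS F) (p : List ℕ) (s t φ : Term F) : Prop :=
  (p ≠ [] → R.DevClosedC s t φ) ∧
  (p = [] → ∃ a u v ψ, R.smstepFst (s, t, φ) a ∧
    Relation.ReflTransGen (R.sstepSndGe []) a (u, v, ψ) ∧ R.TrivialC u v ψ)

/-- An LCTRS is almost development closed. -/
def AlmostDevClosedLCTRS (R : LCTRS F) : Prop :=
  ∀ p s t φ, IsCCPAt R p s t φ → R.AlmostDevClosedC p s t φ

/-- A constrained critical pair `s ≈ t [φ]` is 1-parallel closed. -/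
def OnePCc (R : LCTRS F) (s t φ : Term F) : Prop :=
  ∃ P a u v ψ, R.sparFst P (s, t, φ) a ∧
    Relation.ReflTransGen (R.sstepSndGe []) a (u, v, ψ) ∧ R.TrivialC u v ψ

/-- A constrained parallel critical pair is 2-parallel closed. -/
def TwoPCc (R : LCTRS F) (Ps : List (List ℕ)) (lsig s t Φ : Term F) : Prop :=
  ∃ Q a u v ψ, R.sparSnd Q (s, t, Φ) a ∧
    Relation.ReflTransGen (R.sstepFstGe []) a (u, v, ψ) ∧ R.TrivialC u v ψ ∧
    TVarsBelow v ψ Q ⊆ TVarsBelow lsig Φ Ps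

/-- An LCTRS is parallel closed. -/
def ParallelClosedLCTRS (R : LCTRS F) : Prop :=
  (∀ p s t φ, IsCCPAt R p s t φ → R.OnePCc s t φ) ∧
  (∀ Ps lsig s t Φ, IsCPCP R Ps lsig s t Φ → R.TwoPCc Ps lsig s t Φ)

/-- Linearity of the left-hand sides in the non-logical variables (this is all that
is needed for left-linearity of the transformed TRS). -/
def LeftLinearOutsideLVar (R : LCTRS F) : Prop :=
  ∀ ρ ∈ R.rules, ∀ x, x ∉ LVar ρ → ρ.lhs.count x ≤ 1

end LCTRS

/-- A TRS is almost development closed. -/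
def AlmostDevClosedTRS {F : Type} (S : TRS F) : Prop :=
  ∀ p s t, IsCPAt S p s t →
    (p ≠ [] → tmstep S s t) ∧
    (p = [] → ∃ w, tmstep S s w ∧ Relation.ReflTransGen (tstep S) t w)

/-- A TRS is 1-parallel closed. -/
def OnePCTRS {F : Type} (S : TRS F) : Prop :=
  ∀ p s t, IsCPAt S p s t → ∃ w, tpar S s w ∧ Relation.ReflTransGen (tstep S) t w

/-- A TRS is 2-parallel closed. -/
def TwoPCTRS {F : Type} (S : TRS F) : Prop :=
  ∀ Ps lsig s t, IsPCP S Ps lsig s t →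
    ∃ v Q, Relation.ReflTransGen (tstep S) s v ∧ tparQ S Q t v ∧
      VarsBelow v Q ⊆ VarsBelow lsig Ps

/-- A TRS is parallel closed. -/
def ParallelClosedTRS {F : Type} (S : TRS F) : Prop := OnePCTRS S ∧ TwoPCTRS S

/-! A critical pair of `R̄` comes from rules `ℓ₁τ₁ → r₁τ₁` and `ℓ₂τ₂ → r₂τ₂` of `R̄`, where `τᵢ`
assigns values to the logical variables of a rule `ρᵢ : ℓᵢ → rᵢ [φᵢ]` of `R_rc` (up to renaming),
and from an mgu `σ` of `ℓ₁τ₁` and `(ℓ₂τ₂)|_p`. With `ρ₁`, `ρ₂` renamed apart, `Θ = (τ₁ ∪ τ₂)σ`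
unifies `ℓ₁` and `ℓ₂|_p`, so they have an mgu `σ'` with `σ'Θ = Θ`. As `Θ` maps logical
variables to values, `σ'` maps them to values or variables, giving a constrained critical pair
whose instance under `Θ` is the given critical pair; `Θ` respects its constraint because the
`φᵢτᵢ` hold and the `EC` conjuncts are trivially true. -/

namespace Term

variable {F : Type}

@[elab_as_elim]
theorem induction {P : Term F → Prop} (var : ∀ x, P (.var x))
    (app : ∀ f ts, (∀ t ∈ ts, P t) → P (.app f ts)) : ∀ t, P t
  | .var x => var x
  | .app f ts => app f ts fun t _ => induction var app t

@[simp] theorem subst_var (σ : ℕ → Term F) (x : ℕ) : (var x).subst σ = σ x := by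
  rw [subst]

@[simp] theorem subst_app (σ : ℕ → Term F) (f : F) (ts : List (Term F)) :
    (app f ts).subst σ = app f (ts.map (subst σ)) := by
  rw [subst]; simp

@[simp] theorem varsList_var (x : ℕ) : (var x : Term F).varsList = [x] := by
  rw [varsList]

@[simp] theorem varsList_app (f : F) (ts : List (Term F)) :
    (app f ts).varsList = (ts.map varsList).flatten := by
  rw [varsList]; simp

theorem mem_varsList_app {f : F} {ts : List (Term F)} {x : ℕ} :
    x ∈ (app f ts).varsList ↔ ∃ t ∈ ts, x ∈ t.varsList := by
  simp

theorem subst_subst (σ δ : ℕ → Term F) (t : Term F) :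
    (t.subst σ).subst δ = t.subst fun x => (σ x).subst δ := by
  induction t using induction with
  | var x => simp
  | app f ts ih => simpa using List.map_congr_left ih

theorem subst_congr {σ δ : ℕ → Term F} {t : Term F} (h : ∀ x ∈ t.varsList, σ x = δ x) :
    t.subst σ = t.subst δ := by
  induction t using induction with
  | var x => simpa using h
  | app f ts ih =>
    simp only [subst_app, app.injEq, true_and]
    exact List.map_congr_left fun u hu => ih u hu fun x hx => h x (mem_varsList_app.2 ⟨u, hu, hx⟩)

theorem eq_on_varsList_of_subst_eq {σ δ : ℕ → Term F} {t : Term F}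
    (h : t.subst σ = t.subst δ) : ∀ x ∈ t.varsList, σ x = δ x := by
  induction t using induction with
  | var x => simpa using h
  | app f ts ih =>
    simp only [subst_app, app.injEq, true_and, List.map_inj_left] at h
    simp only [mem_varsList_app]
    rintro x ⟨u, hu, hx⟩
    exact ih u hu (h u hu) x hx

@[simp] theorem subst_var_eq (t : Term F) : t.subst var = t := by
  induction t using induction with
  | var x => simp
  | app f ts ih => simpa using List.map_congr_left ih

theorem subst_of_varsList_eq_nil {t : Term F} (h : t.varsList = []) (σ : ℕ → Term F) :
    t.subst σ = t :=
  (subst_congr (by simp [h])).trans (subst_var_eq t)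

theorem mem_varsList_subst {σ : ℕ → Term F} {t : Term F} {y : ℕ} :
    y ∈ (t.subst σ).varsList ↔ ∃ x ∈ t.varsList, y ∈ (σ x).varsList := by
  induction t using induction with
  | var x => simp
  | app f ts ih =>
    simp only [subst_app, mem_varsList_app, List.mem_map]
    constructor
    · rintro ⟨_, ⟨u, hu, rfl⟩, hy⟩
      obtain ⟨x, hx, hxy⟩ := (ih u hu).1 hy
      exact ⟨x, ⟨u, hu, hx⟩, hxy⟩
    · rintro ⟨x, ⟨u, hu, hx⟩, hxy⟩
      exact ⟨_, ⟨u, hu, rfl⟩, (ih u hu).2 ⟨x, hx, hxy⟩⟩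

@[simp] theorem subtermAt_nil (t : Term F) : t.subtermAt [] = some t := by
  cases t <;> rw [subtermAt]

@[simp] theorem subtermAt_var_cons (x i : ℕ) (p : List ℕ) :
    (var x : Term F).subtermAt (i :: p) = none := by
  rw [subtermAt]

theorem subtermAt_app_cons (f : F) (ts : List (Term F)) (i : ℕ) (p : List ℕ) :
    (app f ts).subtermAt (i :: p) = ts[i]?.bind (subtermAt · p) := by
  rw [subtermAt]; cases ts[i]? <;> rfl

@[simp] theorem replaceAt_nil (t u : Term F) : t.replaceAt [] u = some u := by
  cases t <;> rw [replaceAt]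

theorem replaceAt_app_cons (f : F) (ts : List (Term F)) (i : ℕ) (p : List ℕ) (u : Term F) :
    (app f ts).replaceAt (i :: p) u =
      ts[i]?.bind fun t => (t.replaceAt p u).map fun t' => app f (ts.set i t') := by
  rw [replaceAt]
  cases ts[i]? with
  | none => rfl
  | some t => cases h : t.replaceAt p u <;> simp [h]

theorem subtermAt_subst {t u : Term F} {p : List ℕ} (σ : ℕ → Term F)
    (h : t.subtermAt p = some u) : (t.subst σ).subtermAt p = some (u.subst σ) := by
  induction p generalizing t with
  | nil => simp_all
  | cons i p ih =>
    cases t with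
    | var x => simp at h
    | app f ts =>
      rw [subtermAt_app_cons, Option.bind_eq_some_iff] at h
      obtain ⟨w, hw, hwu⟩ := h
      simp [subtermAt_app_cons, hw, ih hwu]

theorem varsList_subset_of_subtermAt {t u : Term F} {p : List ℕ}
    (h : t.subtermAt p = some u) : ∀ x ∈ u.varsList, x ∈ t.varsList := by
  induction p generalizing t with
  | nil => simp_all
  | cons i p ih =>
    cases t with
    | var x => simp at h
    | app f ts =>
      rw [subtermAt_app_cons, Option.bind_eq_some_iff] at h
      obtain ⟨w, hw, hwu⟩ := h
      exact fun x hx => mem_varsList_app.2 ⟨w, List.mem_of_getElem? hw, ih hwu x hx⟩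

theorem replaceAt_subst {t w t' : Term F} {p : List ℕ} (σ : ℕ → Term F)
    (h : t.replaceAt p w = some t') :
    (t.subst σ).replaceAt p (w.subst σ) = some (t'.subst σ) := by
  induction p generalizing t t' with
  | nil => simp_all
  | cons i p ih =>
    cases t with
    | var x => simp [replaceAt] at h
    | app f ts =>
      simp only [replaceAt_app_cons, Option.bind_eq_some_iff, Option.map_eq_some_iff] at h
      obtain ⟨v, hv, v', hv', rfl⟩ := h
      simp [replaceAt_app_cons, hv, ih hv', List.map_set]

theorem exists_replaceAt_of_subtermAt {t u : Term F} {p : List ℕ}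
    (h : t.subtermAt p = some u) (w : Term F) : ∃ t', t.replaceAt p w = some t' := by
  induction p generalizing t with
  | nil => simp
  | cons i p ih =>
    cases t with
    | var x => simp at h
    | app f ts =>
      rw [subtermAt_app_cons, Option.bind_eq_some_iff] at h
      obtain ⟨v, hv, hvu⟩ := h
      obtain ⟨v', hv'⟩ := ih hvu
      simp [replaceAt_app_cons, hv, hv']

theorem exists_subtermAt_of_subtermAt_subst {σ : ℕ → Term F}
    (hσ : ∀ x, (∃ y, σ x = var y) ∨ ∃ c, σ x = app c []) {p : List ℕ} {t w : Term F}
    (h : (t.subst σ).subtermAt p = some w) : ∃ u, t.subtermAt p = some u ∧ w = u.subst σ := by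
  induction p generalizing t with
  | nil => simp_all
  | cons i p ih =>
    cases t with
    | var x =>
      rcases hσ x with ⟨y, hy⟩ | ⟨c, hc⟩
      · simp [hy] at h
      · simp [hc, subtermAt_app_cons] at h
    | app f ts =>
      simp only [subst_app, subtermAt_app_cons, List.getElem?_map, Option.bind_eq_some_iff,
        Option.map_eq_some_iff] at h
      obtain ⟨_, ⟨v, hv, rfl⟩, hvw⟩ := h
      obtain ⟨u, hu, rfl⟩ := ih hvw
      exact ⟨u, by simp [subtermAt_app_cons, hv, hu], rfl⟩

theorem subst_eq_subst_subst {S : Set ℕ} {Θ ν σ : ℕ → Term F}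
    (h : ∀ x ∈ S, Θ x = (ν x).subst σ) {w : Term F} (hw : w.vars ⊆ S) :
    w.subst Θ = (w.subst ν).subst σ := by
  rw [subst_subst]
  exact subst_congr fun x hx => h x (hw hx)

theorem rename_subst (t : Term F) (π : ℕ → ℕ) (δ : ℕ → Term F) :
    (t.rename π).subst δ = t.subst fun x => δ (π x) := by
  simp [rename, subst_subst]

theorem subst_rename (t : Term F) (τ : ℕ → Term F) (π : ℕ → ℕ) :
    (t.subst τ).rename π = t.subst fun x => (τ x).rename π := by
  rw [rename, subst_subst]; rfl

theorem rename_subst_rename (t : Term F) (ν : ℕ → Term F) (π π' : ℕ ≃ ℕ) :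
    (t.rename π).subst (fun y => (ν (π.symm y)).rename π') = (t.subst ν).rename π' := by
  simp [rename_subst, subst_rename]

@[simp] theorem rename_id (t : Term F) : t.rename id = t := subst_var_eq t

theorem mem_varsList_rename {π : ℕ → ℕ} {t : Term F} {y : ℕ} :
    y ∈ (t.rename π).varsList ↔ ∃ x ∈ t.varsList, π x = y := by
  simp [rename, mem_varsList_subst, eq_comm]

theorem vars_rename (π : ℕ → ℕ) (t : Term F) : (t.rename π).vars = π '' t.vars := by
  ext y; exact mem_varsList_rename

def size : Term F → ℕ
  | var _ => 1
  | app _ ts => 1 + (ts.attach.map fun ⟨t, _⟩ => size t).sum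

@[simp] theorem size_var (x : ℕ) : (var x : Term F).size = 1 := by rw [size]

@[simp] theorem size_app (f : F) (ts : List (Term F)) :
    (app f ts).size = 1 + (ts.map size).sum := by
  rw [size]; simp

theorem size_pos (t : Term F) : 0 < t.size := by
  cases t <;> simp

theorem size_lt_size_app {u : Term F} {f : F} {ts : List (Term F)} (hu : u ∈ ts) :
    u.size < (app f ts).size := by
  have := List.le_sum_of_mem (List.mem_map_of_mem (f := size) hu)
  simp only [size_app]
  omega

theorem size_le_size_subst {x : ℕ} {t : Term F} (h : x ∈ t.varsList) (σ : ℕ → Term F) :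
    (σ x).size ≤ (t.subst σ).size := by
  induction t using induction with
  | var y => simp_all
  | app f ts ih =>
    obtain ⟨u, hu, hx⟩ := mem_varsList_app.1 h
    have := size_lt_size_app (f := f) (List.mem_map_of_mem (f := subst σ) hu)
    rw [subst_app]
    exact (ih u hu hx).trans this.le

theorem not_mem_varsList_of_subst_eq {θ : ℕ → Term F} {x : ℕ} {u : Term F}
    (h : θ x = u.subst θ) (hne : u ≠ var x) : x ∉ u.varsList := by
  intro hx
  cases u with
  | var y => simp_all
  | app f ts =>
    obtain ⟨w, hw, hxw⟩ := mem_varsList_app.1 hx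
    have := size_lt_size_app (f := f) (List.mem_map_of_mem (f := subst θ) hw)
    rw [← subst_app, ← h] at this
    exact absurd (size_le_size_subst hxw θ) this.not_ge

theorem eq_var_or_eq_of_subst_eq_const {u : Term F} {σ : ℕ → Term F} {c : F}
    (h : u.subst σ = .app c []) : (∃ y, u = .var y) ∨ u = .app c [] := by
  cases u with
  | var y => exact Or.inl ⟨y, rfl⟩
  | app f ts => cases ts <;> simp_all

end Term

section Unification

variable {F : Type}

def single (x : ℕ) (u : Term F) : ℕ → Term F := fun y => if y = x then u else Term.var y

theorem subst_single_of_not_mem {x : ℕ} {w : Term F} (hx : x ∉ w.varsList) (u : Term F) :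
    w.subst (single x u) = w :=
  (Term.subst_congr fun y hy => if_neg (by rintro rfl; exact hx hy)).trans
    (Term.subst_var_eq w)

theorem single_subst_eq {θ : ℕ → Term F} {x : ℕ} {u : Term F} (h : θ x = u.subst θ) (y : ℕ) :
    (single x u y).subst θ = θ y := by
  by_cases hy : y = x
  · subst hy; simp [single, h]
  · simp [single, hy]

def UnifiesAll (σ : ℕ → Term F) (E : List (Term F × Term F)) : Prop :=
  ∀ e ∈ E, Unifies σ e.1 e.2

/-- The strong form of generality (it makes `σ` idempotent) that survives variable elimination. -/
def IsIdemMGU (σ : ℕ → Term F) (E : List (Term F × Term F)) : Prop :=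
  UnifiesAll σ E ∧ ∀ θ, UnifiesAll θ E → ∀ x, (σ x).subst θ = θ x

def substEqs (σ : ℕ → Term F) (E : List (Term F × Term F)) : List (Term F × Term F) :=
  E.map fun e => (e.1.subst σ, e.2.subst σ)

theorem unifiesAll_cons {σ : ℕ → Term F} {s t : Term F} {E : List (Term F × Term F)} :
    UnifiesAll σ ((s, t) :: E) ↔ Unifies σ s t ∧ UnifiesAll σ E :=
  List.forall_mem_cons

theorem unifiesAll_append {σ : ℕ → Term F} {E E' : List (Term F × Term F)} :
    UnifiesAll σ (E ++ E') ↔ UnifiesAll σ E ∧ UnifiesAll σ E' :=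
  List.forall_mem_append

theorem unifiesAll_substEqs {σ θ : ℕ → Term F} {E : List (Term F × Term F)} :
    UnifiesAll θ (substEqs σ E) ↔ UnifiesAll (fun x => (σ x).subst θ) E := by
  simp only [UnifiesAll, substEqs, List.forall_mem_map, Unifies, Term.subst_subst]

theorem unifiesAll_zip {θ : ℕ → Term F} {ss ts : List (Term F)} (hlen : ss.length = ts.length) :
    UnifiesAll θ (ss.zip ts) ↔ ss.map (Term.subst θ) = ts.map (Term.subst θ) := by
  induction ss generalizing ts with
  | nil => cases ts <;> simp_all [UnifiesAll]
  | cons s ss ih =>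
    cases ts with
    | nil => simp at hlen
    | cons t ts =>
      simp only [List.zip_cons_cons, unifiesAll_cons, List.map_cons, List.cons.injEq,
        ih (Nat.succ.inj hlen), Unifies]

theorem isIdemMGU_nil : IsIdemMGU (Term.var : ℕ → Term F) [] :=
  ⟨by simp [UnifiesAll], fun _ _ x => Term.subst_var _ x⟩

theorem IsIdemMGU.cons_self {σ : ℕ → Term F} {E : List (Term F × Term F)} (h : IsIdemMGU σ E)
    (t : Term F) : IsIdemMGU σ ((t, t) :: E) := by
  simpa [IsIdemMGU, unifiesAll_cons, Unifies] using h

theorem IsIdemMGU.swap {σ : ℕ → Term F} {s t : Term F} {E : List (Term F × Term F)}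
    (h : IsIdemMGU σ ((t, s) :: E)) : IsIdemMGU σ ((s, t) :: E) := by
  simpa [IsIdemMGU, unifiesAll_cons, Unifies, eq_comm] using h

theorem IsIdemMGU.cons_var {σ : ℕ → Term F} {x : ℕ} {u : Term F} {E : List (Term F × Term F)}
    (hx : x ∉ u.varsList) (h : IsIdemMGU σ (substEqs (single x u) E)) :
    IsIdemMGU (fun y => (single x u y).subst σ) ((Term.var x, u) :: E) := by
  refine ⟨unifiesAll_cons.2 ⟨?_, ?_⟩, fun θ hθ y => ?_⟩
  · rw [Unifies, Term.subst_var, ← Term.subst_subst, subst_single_of_not_mem hx]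
    simp [single]
  · exact unifiesAll_substEqs.1 h.1
  · obtain ⟨hxu, hE⟩ := unifiesAll_cons.1 hθ
    have hxu : θ x = u.subst θ := by simpa [Unifies] using hxu
    have hθ : (fun y => (single x u y).subst θ) = θ := funext (single_subst_eq hxu)
    have hgen := h.2 θ (unifiesAll_substEqs.2 (by rw [hθ]; exact hE))
    rw [Term.subst_subst, funext hgen, single_subst_eq hxu]

theorem IsIdemMGU.cons_app {σ : ℕ → Term F} {f : F} {ss ts : List (Term F)}
    {E : List (Term F × Term F)} (hlen : ss.length = ts.length) (h : IsIdemMGU σ (ss.zip ts ++ E)) :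
    IsIdemMGU σ ((Term.app f ss, Term.app f ts) :: E) := by
  have key : ∀ θ : ℕ → Term F, UnifiesAll θ ((Term.app f ss, Term.app f ts) :: E) ↔
      UnifiesAll θ (ss.zip ts ++ E) := by
    intro θ
    simp [unifiesAll_cons, unifiesAll_append, unifiesAll_zip hlen, Unifies]
  exact ⟨(key σ).2 h.1, fun θ hθ => h.2 θ ((key θ).1 hθ)⟩

def eqsVars (E : List (Term F × Term F)) : Finset ℕ :=
  (E.flatMap fun e => e.1.varsList ++ e.2.varsList).toFinset

def eqsSize (E : List (Term F × Term F)) : ℕ := (E.map fun e => e.1.size + e.2.size).sum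

def eqsMeasure (E : List (Term F × Term F)) : ℕ ×ₗ ℕ := toLex ((eqsVars E).card, eqsSize E)

theorem eqsVars_cons (s t : Term F) (E : List (Term F × Term F)) :
    eqsVars ((s, t) :: E) = s.varsList.toFinset ∪ t.varsList.toFinset ∪ eqsVars E := by
  ext; simp [eqsVars]

theorem eqsSize_cons (s t : Term F) (E : List (Term F × Term F)) :
    eqsSize ((s, t) :: E) = s.size + t.size + eqsSize E := by
  simp [eqsSize]

theorem eqsMeasure_swap (s t : Term F) (E : List (Term F × Term F)) :
    eqsMeasure ((s, t) :: E) = eqsMeasure ((t, s) :: E) := by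
  simp only [eqsMeasure, eqsVars_cons, eqsSize_cons, Finset.union_comm s.varsList.toFinset,
    Nat.add_comm s.size]

theorem eqsMeasure_lt_of_subset {E E' : List (Term F × Term F)} (hV : eqsVars E' ⊆ eqsVars E)
    (hS : eqsSize E' < eqsSize E) : eqsMeasure E' < eqsMeasure E := by
  rcases (Finset.card_le_card hV).lt_or_eq with h | h
  · exact Prod.Lex.toLex_lt_toLex.2 (Or.inl h)
  · exact Prod.Lex.toLex_lt_toLex.2 (Or.inr ⟨h, hS⟩)

theorem eqsMeasure_lt_cons (s t : Term F) (E : List (Term F × Term F)) :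
    eqsMeasure E < eqsMeasure ((s, t) :: E) := by
  refine eqsMeasure_lt_of_subset (eqsVars_cons s t E ▸ Finset.subset_union_right) ?_
  have := s.size_pos
  rw [eqsSize_cons]
  omega

theorem mem_varsList_subst_single {x y : ℕ} {u w : Term F}
    (h : y ∈ (w.subst (single x u)).varsList) : y ∈ u.varsList ∨ y ∈ w.varsList ∧ y ≠ x := by
  obtain ⟨z, hz, hyz⟩ := Term.mem_varsList_subst.1 h
  unfold single at hyz
  split_ifs at hyz with hzx
  · exact Or.inl hyz
  · simp only [Term.varsList_var, List.mem_singleton] at hyz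
    exact Or.inr ⟨hyz ▸ hz, hyz ▸ hzx⟩

theorem eqsMeasure_substEqs_lt {x : ℕ} {u : Term F} (hx : x ∉ u.varsList)
    (E : List (Term F × Term F)) :
    eqsMeasure (substEqs (single x u) E) < eqsMeasure ((Term.var x, u) :: E) := by
  have hsub : eqsVars (substEqs (single x u) E) ⊆ (eqsVars ((Term.var x, u) :: E)).erase x := by
    intro y hy
    simp only [eqsVars, substEqs, List.mem_toFinset, List.mem_flatMap, List.mem_map,
      List.mem_append] at hy
    obtain ⟨_, ⟨e, he, rfl⟩, hy⟩ := hy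
    have hmem : ∀ w, y ∈ (w.subst (single x u)).varsList → w = e.1 ∨ w = e.2 →
        y ∈ (eqsVars ((Term.var x, u) :: E)).erase x := by
      rintro w hw hwe
      rcases mem_varsList_subst_single hw with hyu | ⟨hyw, hyx⟩
      · exact Finset.mem_erase.2 ⟨by rintro rfl; exact hx hyu, by simp [eqsVars_cons, hyu]⟩
      · refine Finset.mem_erase.2 ⟨hyx, ?_⟩
        rw [eqsVars_cons]
        refine Finset.mem_union_right _ ?_
        simp only [eqsVars, List.mem_toFinset, List.mem_flatMap, List.mem_append]
        exact ⟨e, he, by rcases hwe with rfl | rfl <;> simp [hyw]⟩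
    rcases hy with hy | hy
    · exact hmem _ hy (Or.inl rfl)
    · exact hmem _ hy (Or.inr rfl)
  refine Prod.Lex.toLex_lt_toLex.2 (Or.inl ?_)
  exact (Finset.card_le_card hsub).trans_lt
    (Finset.card_erase_lt_of_mem (by simp [eqsVars_cons]))

theorem eqsSize_zip_le (ss ts : List (Term F)) :
    eqsSize (ss.zip ts) ≤ (ss.map Term.size).sum + (ts.map Term.size).sum := by
  induction ss generalizing ts with
  | nil => simp [eqsSize]
  | cons s ss ih =>
    cases ts with
    | nil => simp [eqsSize]
    | cons t ts =>
      have := ih ts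
      simp only [List.zip_cons_cons, eqsSize_cons, List.map_cons, List.sum_cons]
      omega

theorem eqsMeasure_zip_lt (f g : F) (ss ts : List (Term F)) (E : List (Term F × Term F)) :
    eqsMeasure (ss.zip ts ++ E) < eqsMeasure ((Term.app f ss, Term.app g ts) :: E) := by
  refine eqsMeasure_lt_of_subset ?_ ?_
  · intro y hy
    simp only [eqsVars, List.flatMap_append, List.mem_toFinset, List.mem_append,
      List.mem_flatMap] at hy
    rw [eqsVars_cons]
    rcases hy with ⟨e, he, hy⟩ | hy
    · obtain ⟨hs, ht⟩ := List.of_mem_zip he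
      rcases hy with hy | hy
      · exact Finset.mem_union_left _ (Finset.mem_union_left _
          (List.mem_toFinset.2 (Term.mem_varsList_app.2 ⟨_, hs, hy⟩)))
      · exact Finset.mem_union_left _ (Finset.mem_union_right _
          (List.mem_toFinset.2 (Term.mem_varsList_app.2 ⟨_, ht, hy⟩)))
    · exact Finset.mem_union_right _ (by simpa [eqsVars] using hy)
  · have := eqsSize_zip_le ss ts
    simp only [eqsSize, List.map_append, List.sum_append] at this ⊢
    simp only [List.map_cons, List.sum_cons, Term.size_app]
    omega

theorem exists_isIdemMGU :
    ∀ E : List (Term F × Term F), (∃ θ, UnifiesAll θ E) → ∃ σ, IsIdemMGU σ E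
  | [], _ => ⟨Term.var, isIdemMGU_nil⟩
  | (s, t) :: E, ⟨θ, hθ⟩ => by
    obtain ⟨hst, hE⟩ := unifiesAll_cons.1 hθ
    by_cases heq : s = t
    · subst heq
      obtain ⟨σ, hσ⟩ := exists_isIdemMGU E ⟨θ, hE⟩
      exact ⟨σ, hσ.cons_self s⟩
    cases hs : s with
    | var x =>
      have hxt : θ x = t.subst θ := by simpa [Unifies, hs] using hst
      have hx := Term.not_mem_varsList_of_subst_eq hxt (by rw [← hs]; exact Ne.symm heq)
      obtain ⟨σ, hσ⟩ := exists_isIdemMGU (substEqs (single x t) E)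
        ⟨θ, unifiesAll_substEqs.2 (by rw [funext (single_subst_eq hxt)]; exact hE)⟩
      exact ⟨_, hσ.cons_var hx⟩
    | app f ss =>
      cases ht : t with
      | var x =>
        have hxs : θ x = (Term.app f ss).subst θ := by simpa [Unifies, hs, ht] using hst.symm
        have hx := Term.not_mem_varsList_of_subst_eq hxs (by simp)
        obtain ⟨σ, hσ⟩ := exists_isIdemMGU (substEqs (single x (Term.app f ss)) E)
          ⟨θ, unifiesAll_substEqs.2 (by rw [funext (single_subst_eq hxs)]; exact hE)⟩
        exact ⟨_, (hσ.cons_var hx).swap⟩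
      | app g ts =>
        obtain ⟨rfl, hmap⟩ : f = g ∧ ss.map (Term.subst θ) = ts.map (Term.subst θ) := by
          simpa [Unifies, hs, ht] using hst
        have hlen : ss.length = ts.length := by simpa using congrArg List.length hmap
        obtain ⟨σ, hσ⟩ := exists_isIdemMGU (ss.zip ts ++ E)
          ⟨θ, unifiesAll_append.2 ⟨(unifiesAll_zip hlen).2 hmap, hE⟩⟩
        exact ⟨σ, hσ.cons_app hlen⟩
termination_by E => eqsMeasure E
decreasing_by
  all_goals subst_vars
  · exact eqsMeasure_lt_cons _ _ _
  · exact eqsMeasure_substEqs_lt hx E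
  · exact eqsMeasure_swap (Term.app f ss) (Term.var x) E ▸ eqsMeasure_substEqs_lt hx E
  · exact eqsMeasure_zip_lt _ _ _ _ _

theorem exists_isIdemMGU_pair {s t : Term F} {θ : ℕ → Term F} (h : Unifies θ s t) :
    ∃ σ, Unifies σ s t ∧ ∀ θ, Unifies θ s t → ∀ x, (σ x).subst θ = θ x := by
  have hst : ∀ θ : ℕ → Term F, UnifiesAll θ [(s, t)] ↔ Unifies θ s t := by simp [UnifiesAll]
  obtain ⟨σ, hσ, hgen⟩ := exists_isIdemMGU [(s, t)] ⟨θ, (hst θ).2 h⟩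
  exact ⟨σ, (hst σ).1 hσ, fun θ hθ => hgen θ ((hst θ).2 hθ)⟩

end Unification

section Rules

variable {F : Type}

def Rule.rename (π : ℕ → ℕ) (ρ : Rule F) : Rule F :=
  ⟨ρ.lhs.rename π, ρ.rhs.rename π, ρ.cond.rename π⟩

theorem isVariantR_iff {a b : Rule F} : IsVariantR a b ↔ ∃ π : ℕ ≃ ℕ, b = a.rename π := by
  constructor
  · rintro ⟨π, h₁, h₂, h₃⟩
    exact ⟨π, by cases b; simp_all [Rule.rename]⟩
  · rintro ⟨π, rfl⟩
    exact ⟨π, rfl, rfl, rfl⟩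

theorem IsVariantR.refl (ρ : Rule F) : IsVariantR ρ ρ :=
  ⟨Equiv.refl ℕ, by simp [Term.rename], by simp [Term.rename], by simp [Term.rename]⟩

theorem IsVariantR.rename {a b : Rule F} (h : IsVariantR a b) (π : ℕ ≃ ℕ) :
    IsVariantR a (b.rename π) := by
  obtain ⟨κ, rfl⟩ := isVariantR_iff.1 h
  refine isVariantR_iff.2 ⟨κ.trans π, ?_⟩
  simp only [Rule.rename, Term.rename, Term.subst_subst, Term.subst_var]
  rfl

theorem LVar_rename (π : ℕ ≃ ℕ) (ρ : Rule F) : LVar (ρ.rename π) = π '' LVar ρ := by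
  simp only [LVar, Rule.rename, Term.vars_rename, Set.image_union,
    Set.image_sdiff π.injective]

theorem ruleVars_rename (π : ℕ → ℕ) (ρ : Rule F) : ruleVars (ρ.rename π) = π '' ruleVars ρ := by
  simp only [ruleVars, Rule.rename, Term.vars_rename, Set.image_union]

theorem cond_vars_subset_LVar (ρ : Rule F) : ρ.cond.vars ⊆ LVar ρ := Set.subset_union_left

theorem lhs_vars_subset_ruleVars (ρ : Rule F) : ρ.lhs.vars ⊆ ruleVars ρ :=
  fun _ hx => Or.inl (Or.inl hx)

theorem rhs_vars_subset_ruleVars (ρ : Rule F) : ρ.rhs.vars ⊆ ruleVars ρ :=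
  fun _ hx => Or.inl (Or.inr hx)

theorem cond_vars_subset_ruleVars (ρ : Rule F) : ρ.cond.vars ⊆ ruleVars ρ :=
  fun _ hx => Or.inr hx

theorem LVar_subset_ruleVars (ρ : Rule F) : LVar ρ ⊆ ruleVars ρ :=
  Set.union_subset (cond_vars_subset_ruleVars ρ)
    (Set.sdiff_subset.trans (rhs_vars_subset_ruleVars ρ))

theorem mem_LVar_of_mem_EVarList {ρ : Rule F} {x : ℕ} (hx : x ∈ EVarList ρ) : x ∈ LVar ρ := by
  simp only [EVarList, List.mem_filter, Bool.not_eq_true', Bool.or_eq_false_iff] at hx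
  exact Or.inr ⟨hx.1, by simpa [Term.vars] using hx.2.1⟩

theorem exists_bound_ruleVars (ρ : Rule F) : ∃ N, ∀ x ∈ ruleVars ρ, x < N := by
  refine ⟨(ρ.lhs.varsList ++ ρ.rhs.varsList ++ ρ.cond.varsList).sum + 1, fun x hx => ?_⟩
  have : x ∈ ρ.lhs.varsList ++ ρ.rhs.varsList ++ ρ.cond.varsList := by
    rcases hx with (hx | hx) | hx <;> simp_all [Term.vars]
  exact Nat.lt_succ_of_le (List.le_sum_of_mem this)

def swapBlocks (N : ℕ) : ℕ ≃ ℕ where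
  toFun x := if x < N then x + N else if x < 2 * N then x - N else x
  invFun x := if x < N then x + N else if x < 2 * N then x - N else x
  left_inv x := by dsimp only; split_ifs <;> omega
  right_inv x := by dsimp only; split_ifs <;> omega

theorem exists_rename_disjoint (ρ₁ ρ₂ : Rule F) :
    ∃ π : ℕ ≃ ℕ, ruleVars ρ₁ ∩ ruleVars (ρ₂.rename π) = ∅ := by
  obtain ⟨N₁, hN₁⟩ := exists_bound_ruleVars ρ₁
  obtain ⟨N₂, hN₂⟩ := exists_bound_ruleVars ρ₂
  refine ⟨swapBlocks (N₁ + N₂), Set.eq_empty_iff_forall_notMem.2 ?_⟩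
  rintro _ ⟨h₁, h₂⟩
  rw [ruleVars_rename] at h₂
  obtain ⟨x, hx, rfl⟩ := h₂
  have h₁ := hN₁ _ h₁
  have := hN₂ x hx
  simp only [swapBlocks, Equiv.coe_fn_mk] at h₁
  split_ifs at h₁ <;> omega

end Rules

theorem exists_eq_on_of_inter_eq_empty {α β : Type*} {S T : Set α} (h : S ∩ T = ∅)
    (f g : α → β) : ∃ Θ : α → β, (∀ x ∈ S, Θ x = f x) ∧ ∀ x ∈ T, Θ x = g x := by
  classical
  exact ⟨S.piecewise f g, fun x hx => S.piecewise_eq_of_mem f g hx, fun x hx =>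
    S.piecewise_eq_of_notMem f g fun hS => (Set.eq_empty_iff_forall_notMem.1 h) x ⟨hS, hx⟩⟩

theorem IsLogical.subst {F : Type} {Fth : Set F} {t : Term F} (ht : IsLogical Fth t)
    {σ : ℕ → Term F} (hσ : ∀ x ∈ t.varsList, IsLogical Fth (σ x)) :
    IsLogical Fth (t.subst σ) := by
  induction ht with
  | var x => simpa using hσ
  | app hf _ ih =>
    rw [Term.subst_app]
    refine IsLogical.app hf ?_
    simp only [List.mem_map]
    rintro _ ⟨u, hu, rfl⟩
    exact ih u hu fun x hx => hσ x (Term.mem_varsList_app.2 ⟨u, hu, hx⟩)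

namespace LCTRS

variable {F : Type} {R : LCTRS F}

theorem WF.val_subset (h : R.WF) : R.Val ⊆ R.Fth := h.1

theorem WF.J_mem_val (h : R.WF) (t : Term F) : R.J t ∈ R.Val := h.2.2.2.1 t

theorem WF.J_value (h : R.WF) {v : F} (hv : v ∈ R.Val) : R.J (.app v []) = v := h.2.2.2.2.1 v hv

theorem WF.tt_mem (h : R.WF) : R.tt ∈ R.Val := h.2.2.2.2.2.1

theorem WF.andS_mem (h : R.WF) : R.andS ∈ R.Fth := h.2.2.2.2.2.2.1.1

theorem WF.eqS_mem (h : R.WF) : R.eqS ∈ R.Fth := h.2.2.2.2.2.2.2.2.1.1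

theorem WF.J_conj (h : R.WF) {a b : Term F} (ha : IsLogical R.Fth a) (hb : IsLogical R.Fth b)
    (ha' : Ground a) (hb' : Ground b) :
    R.J (R.conj a b) = R.tt ↔ R.J a = R.tt ∧ R.J b = R.tt :=
  h.2.2.2.2.2.2.2.2.2.2.1 a b ha hb ha' hb'

theorem WF.J_eq (h : R.WF) {a b : Term F} (ha : IsLogical R.Fth a) (hb : IsLogical R.Fth b)
    (ha' : Ground a) (hb' : Ground b) :
    R.J (.app R.eqS [a, b]) = R.tt ↔ R.J a = R.J b :=
  h.2.2.2.2.2.2.2.2.2.2.2.1 a b ha hb ha' hb'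

theorem WF.rules (h : R.WF) {ρ : Rule F} (hρ : ρ ∈ R.rules) :
    (∃ f ts, ρ.lhs = .app f ts ∧ f ∈ R.Fte \ R.Fth) ∧ IsLogical R.Fth ρ.cond :=
  h.2.2.2.2.2.2.2.2.2.2.2.2 ρ hρ

theorem WF.isLogical_value (h : R.WF) {v : F} (hv : v ∈ R.Val) :
    IsLogical R.Fth (.app v [] : Term F) :=
  .app (h.val_subset hv) (by simp)

theorem varsList_conj (R : LCTRS F) (a b : Term F) :
    (R.conj a b).varsList = a.varsList ++ b.varsList := by
  simp [LCTRS.conj]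

theorem conj_subst (R : LCTRS F) (a b : Term F) (σ : ℕ → Term F) :
    (R.conj a b).subst σ = R.conj (a.subst σ) (b.subst σ) := by
  simp [LCTRS.conj]

theorem bigConj_subst (R : LCTRS F) (l : List (Term F)) (σ : ℕ → Term F) :
    (R.bigConj l).subst σ = R.bigConj (l.map (Term.subst σ)) := by
  induction l with
  | nil => simp [bigConj, trueT]
  | cons a l ih => simp_all [bigConj, LCTRS.conj]

def Holds (R : LCTRS F) (φ : Term F) : Prop := IsLogical R.Fth φ ∧ Ground φ ∧ R.J φ = R.tt

theorem Holds.validC {φ : Term F} (h : R.Holds φ) : R.validC φ := fun γ _ => by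
  rw [Term.subst_of_varsList_eq_nil h.2.1]; exact h.2.2

theorem Holds.conj (hwf : R.WF) {a b : Term F} (ha : R.Holds a) (hb : R.Holds b) :
    R.Holds (R.conj a b) := by
  refine ⟨.app hwf.andS_mem ?_, ?_, (hwf.J_conj ha.1 hb.1 ha.2.1 hb.2.1).2 ⟨ha.2.2, hb.2.2⟩⟩
  · simp only [List.mem_cons, List.not_mem_nil, or_false]
    rintro _ (rfl | rfl)
    exacts [ha.1, hb.1]
  · have h₁ : a.varsList = [] := ha.2.1
    have h₂ : b.varsList = [] := hb.2.1
    simp [Ground, LCTRS.conj, h₁, h₂]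

theorem holds_bigConj (hwf : R.WF) {l : List (Term F)} (h : ∀ a ∈ l, R.Holds a) :
    R.Holds (R.bigConj l) := by
  induction l with
  | nil =>
    exact ⟨hwf.isLogical_value hwf.tt_mem, by simp [Ground, bigConj, trueT], hwf.J_value hwf.tt_mem⟩
  | cons a l ih =>
    exact (h a (by simp)).conj hwf (ih fun b hb => h b (by simp [hb]))

theorem holds_eq_self (hwf : R.WF) {a : Term F} (ha : IsLogical R.Fth a) (ha' : Ground a) :
    R.Holds (.app R.eqS [a, a]) := by
  refine ⟨.app hwf.eqS_mem ?_, ?_, (hwf.J_eq ha ha ha' ha').2 rfl⟩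
  · simp only [List.mem_cons, List.not_mem_nil, or_false, or_self]
    rintro _ rfl; exact ha
  · have h : a.varsList = [] := ha'
    simp [Ground, h]

theorem holds_EC_subst (hwf : R.WF) {ρ : Rule F} {Θ : ℕ → Term F}
    (hΘ : ∀ x ∈ LVar ρ, R.isVal (Θ x)) : R.Holds ((R.EC ρ).subst Θ) := by
  rw [EC, bigConj_subst, List.map_map]
  refine holds_bigConj hwf fun a ha => ?_
  obtain ⟨x, hx, rfl⟩ := List.mem_map.1 ha
  obtain ⟨v, hv, hΘx⟩ := hΘ x (mem_LVar_of_mem_EVarList hx)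
  simpa [hΘx] using holds_eq_self hwf (hwf.isLogical_value hv) (by simp [Ground])

theorem mem_LVar_of_mem_varsList_EC {ρ : Rule F} {x : ℕ} (hx : x ∈ (R.EC ρ).varsList) :
    x ∈ LVar ρ := by
  suffices ∀ l : List ℕ, x ∈ (R.bigConj (l.map fun y => .app R.eqS [.var y, .var y])).varsList →
      x ∈ l from mem_LVar_of_mem_EVarList (this _ hx)
  intro l hl
  induction l with
  | nil => simp [bigConj, trueT] at hl
  | cons y l ih =>
    simp only [List.map_cons, bigConj, List.foldr_cons, varsList_conj, List.mem_append] at hl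
    rcases hl with hl | hl
    · simp_all
    · exact List.mem_cons_of_mem y (ih hl)

theorem ground_subst_of_isVal {t : Term F} {σ : ℕ → Term F}
    (h : ∀ x ∈ t.varsList, R.isVal (σ x)) : Ground (t.subst σ) := by
  refine List.eq_nil_iff_forall_not_mem.2 fun y hy => ?_
  obtain ⟨x, hx, hy⟩ := Term.mem_varsList_subst.1 hy
  obtain ⟨v, -, hv⟩ := h x hx
  simp [hv] at hy

/-- Presents the renamed rule `ρ.lhs ν → ρ.rhs ν` of `R̄` as an instance of a variant `ρ` of a
rule of `R_rc`. -/
structure BarPresentation (R : LCTRS F) (ρ : Rule F) (ν : ℕ → Term F) : Prop where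
  variant : ∃ ρ₀ ∈ R.Rrc, IsVariantR ρ₀ ρ
  isVal : ∀ x ∈ LVar ρ, R.isVal (ν x)
  renames : ∃ χ : ℕ ≃ ℕ, ∀ x ∉ LVar ρ, ν x = .var (χ x)
  cond_logical : IsLogical R.Fth ρ.cond
  cond_true : R.J (ρ.cond.subst ν) = R.tt
  lhs_root : ∃ f ts, ρ.lhs = .app f ts ∧ f ∉ R.Val

namespace BarPresentation

variable {ρ : Rule F} {ν : ℕ → Term F}

theorem var_or_const (h : R.BarPresentation ρ ν) (x : ℕ) :
    (∃ y, ν x = .var y) ∨ ∃ c, ν x = .app c [] := by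
  by_cases hx : x ∈ LVar ρ
  · obtain ⟨v, -, hv⟩ := h.isVal x hx
    exact Or.inr ⟨v, hv⟩
  · obtain ⟨χ, hχ⟩ := h.renames
    exact Or.inl ⟨χ x, hχ x hx⟩

theorem ground_cond (h : R.BarPresentation ρ ν) : Ground (ρ.cond.subst ν) :=
  ground_subst_of_isVal fun x hx => h.isVal x (cond_vars_subset_LVar ρ hx)

theorem holds_cond (hwf : R.WF) (h : R.BarPresentation ρ ν) : R.Holds (ρ.cond.subst ν) := by
  refine ⟨h.cond_logical.subst fun x hx => ?_, h.ground_cond, h.cond_true⟩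
  obtain ⟨v, hv, hνx⟩ := h.isVal x (cond_vars_subset_LVar ρ hx)
  exact hνx ▸ hwf.isLogical_value hv

theorem eq_of_mem_LVar {Θ σ : ℕ → Term F} (h : R.BarPresentation ρ ν)
    (hΘ : ∀ x ∈ ruleVars ρ, Θ x = (ν x).subst σ) :
    ∀ x ∈ LVar ρ, Θ x = ν x := fun x hx => by
  obtain ⟨v, -, hv⟩ := h.isVal x hx
  rw [hΘ x (LVar_subset_ruleVars ρ hx), hv, Term.subst_app, List.map_nil]

theorem holds_cond_of_eqOn (hwf : R.WF) {Θ σ : ℕ → Term F} (h : R.BarPresentation ρ ν)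
    (hΘ : ∀ x ∈ ruleVars ρ, Θ x = (ν x).subst σ) :
    R.Holds (ρ.cond.subst Θ) := by
  rw [Term.subst_eq_subst_subst hΘ (cond_vars_subset_ruleVars ρ),
    Term.subst_of_varsList_eq_nil h.ground_cond]
  exact h.holds_cond hwf

theorem rename (h : R.BarPresentation ρ ν) (π π' : ℕ ≃ ℕ) :
    R.BarPresentation (ρ.rename π) fun y => (ν (π.symm y)).rename π' where
  variant := by
    obtain ⟨ρ₀, hρ₀, hvar⟩ := h.variant
    exact ⟨ρ₀, hρ₀, hvar.rename π⟩
  isVal := by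
    rw [LVar_rename]
    rintro _ ⟨x, hx, rfl⟩
    obtain ⟨v, hv, hνx⟩ := h.isVal x hx
    exact ⟨v, hv, by simp [hνx, Term.rename]⟩
  renames := by
    obtain ⟨χ, hχ⟩ := h.renames
    refine ⟨π.symm.trans (χ.trans π'), fun y hy => ?_⟩
    have : π.symm y ∉ LVar ρ := fun hmem => hy (by rw [LVar_rename]; exact ⟨_, hmem, by simp⟩)
    simp [hχ _ this, Term.rename]
  cond_logical := h.cond_logical.subst fun _ _ => .var _
  cond_true := by
    rw [Rule.rename, Term.rename_subst_rename, Term.rename,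
      Term.subst_of_varsList_eq_nil h.ground_cond]
    exact h.cond_true
  lhs_root := by
    obtain ⟨f, ts, hlhs, hf⟩ := h.lhs_root
    exact ⟨f, _, by rw [Rule.rename, hlhs, Term.rename, Term.subst_app], hf⟩

theorem exists_disjoint (h : R.BarPresentation ρ ν) (ρ' : Rule F) :
    ∃ ρ₂ ν₂, R.BarPresentation ρ₂ ν₂ ∧ ruleVars ρ' ∩ ruleVars ρ₂ = ∅ ∧
      ρ₂.lhs.subst ν₂ = ρ.lhs.subst ν ∧ ρ₂.rhs.subst ν₂ = ρ.rhs.subst ν := by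
  obtain ⟨π, hπ⟩ := exists_rename_disjoint ρ' ρ
  refine ⟨ρ.rename π, _, h.rename π (Equiv.refl ℕ), hπ, ?_, ?_⟩ <;>
    rw [Rule.rename, Term.rename_subst_rename, Equiv.coe_refl, Term.rename_id]

theorem isFun_of_unifies {ρ₁ ρ₂ : Rule F} {ν₁ ν₂ σ : ℕ → Term F} {u : Term F}
    (h₁ : R.BarPresentation ρ₁ ν₁) (h₂ : R.BarPresentation ρ₂ ν₂) (hfun : (u.subst ν₂).isFun)
    (huni : Unifies σ (ρ₁.lhs.subst ν₁) (u.subst ν₂)) : u.isFun := by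
  cases u with
  | app => trivial
  | var y =>
    by_cases hy : y ∈ LVar ρ₂
    · obtain ⟨v, hv, hνy⟩ := h₂.isVal y hy
      obtain ⟨f, ts, hlhs, hf⟩ := h₁.lhs_root
      simp only [Unifies, hlhs, Term.subst_app, Term.subst_var, hνy, Term.app.injEq] at huni
      exact absurd (huni.1 ▸ hv) hf
    · obtain ⟨χ, hχ⟩ := h₂.renames
      simp [hχ y hy, Term.isFun] at hfun

theorem isVariantP {κ : ℕ ≃ ℕ} {ν₁ ν₂ : ℕ → Term F}
    (h₁ : R.BarPresentation ρ ν₁) (h₂ : R.BarPresentation (ρ.rename κ) ν₂)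
    (hrhs : ρ.rhs.vars ⊆ ρ.lhs.vars) (hagree : ∀ x ∈ ρ.lhs.varsList, x ∈ LVar ρ → ν₂ (κ x) = ν₁ x) :
    IsVariantP (ρ.lhs.subst ν₁, ρ.rhs.subst ν₁)
      ((ρ.rename κ).lhs.subst ν₂, (ρ.rename κ).rhs.subst ν₂) := by
  obtain ⟨χ₁, hχ₁⟩ := h₁.renames
  obtain ⟨χ₂, hχ₂⟩ := h₂.renames
  have key : ∀ w : Term F, (∀ x ∈ w.varsList, x ∈ ρ.lhs.varsList) →
      (w.rename κ).subst ν₂ = (w.subst ν₁).rename (χ₁.symm.trans (κ.trans χ₂)) := by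
    intro w hw
    rw [Term.rename_subst, Term.subst_rename]
    refine Term.subst_congr fun x hx => ?_
    by_cases hL : x ∈ LVar ρ
    · obtain ⟨v, -, hv⟩ := h₁.isVal x hL
      rw [hagree x (hw x hx) hL, hv]
      simp [Term.rename]
    · have hL' : κ x ∉ LVar (ρ.rename κ) := by simpa [LVar_rename] using hL
      simp [hχ₁ x hL, hχ₂ _ hL', Term.rename]
  exact ⟨χ₁.symm.trans (κ.trans χ₂), key _ fun _ => id, key _ fun x hx => hrhs hx⟩

end BarPresentation

theorem varsList_calcRule_lhs (R : LCTRS F) (f : F) :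
    (R.calcRule f).lhs.varsList = List.range (R.arity f) := by
  simp only [calcRule, Term.varsList_app, List.map_map, Function.comp_def, Term.varsList_var]
  induction List.range (R.arity f) <;> simp_all

theorem LVar_calcRule (R : LCTRS F) (f : F) : LVar (R.calcRule f) = {x | x ≤ R.arity f} := by
  ext x
  have h := R.varsList_calcRule_lhs f
  simp only [calcRule] at h
  have : (x = R.arity f ∨ x < R.arity f) ∨ x = R.arity f ∧ R.arity f ≤ x ↔ x ≤ R.arity f := by
    omega
  simpa [LVar, Term.vars, calcRule, h] using this

theorem isLogical_calcRule_cond (hwf : R.WF) {f : F} (hf : f ∈ R.Fth) :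
    IsLogical R.Fth (R.calcRule f).cond := by
  refine .app hwf.eqS_mem ?_
  simp only [List.mem_cons, List.not_mem_nil, or_false]
  rintro _ (rfl | rfl)
  · exact .var _
  · exact .app hf (by simp only [List.mem_map]; rintro _ ⟨i, -, rfl⟩; exact .var i)

theorem barPresentation_calcRule (hwf : R.WF) {f : F} (hf : f ∈ R.Fth \ R.Val) {vs : List F}
    (hlen : vs.length = R.arity f) (hvs : ∀ v ∈ vs, v ∈ R.Val) :
    ∃ ν, R.BarPresentation (R.calcRule f) ν ∧
      ((R.calcRule f).lhs.subst ν, (R.calcRule f).rhs.subst ν) =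
        (Term.app f (vs.map fun v => .app v []),
          .app (R.J (.app f (vs.map fun v => .app v []))) []) := by
  set vals : List (Term F) := vs.map fun v => .app v []
  set res : Term F := .app (R.J (.app f vals)) []
  have hvlen : vals.length = R.arity f := by simp [vals, hlen]
  -- the argument variables `0, …, n - 1` get the `vᵢ`, the result variable `n` gets `J(f(v⃗))`
  let ν : ℕ → Term F := fun x => (vals ++ [res]).getD x (.var x)
  have hν_lt : ∀ i (hi : i < vals.length), ν i = vals[i] := fun i hi => by
    simp only [ν, List.getD_append _ _ _ _ hi, List.getD_eq_getElem _ _ hi]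
  have hν_n : ν (R.arity f) = res := by
    simp [ν, hvlen]
  have hν_gt : ∀ x, R.arity f < x → ν x = .var x := fun x hx =>
    List.getD_eq_default _ _ (by rw [List.length_append, hvlen, List.length_singleton]; omega)
  have hlhs : (R.calcRule f).lhs.subst ν = .app f vals := by
    simp only [calcRule, Term.subst_app, List.map_map, Function.comp_def, Term.subst_var]
    congr 1
    refine List.ext_getElem (by simp [hvlen]) fun i h₁ _ => ?_
    simp only [List.getElem_map, List.getElem_range]
    exact hν_lt i (by simpa [hvlen] using h₁)
  have hvals : IsLogical R.Fth (.app f vals) := .app hf.1 (by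
    simp only [vals, List.mem_map]
    rintro _ ⟨v, hv, rfl⟩
    exact hwf.isLogical_value (hvs v hv))
  have hvals' : Ground (.app f vals : Term F) := by simp [Ground, vals]
  refine ⟨ν, ⟨?_, ?_, ?_, ?_, ?_, ?_⟩, ?_⟩
  · exact ⟨R.calcRule f, Or.inr ⟨f, hf, rfl⟩, IsVariantR.refl _⟩
  · rw [LVar_calcRule]
    intro x (hx : x ≤ R.arity f)
    rcases hx.lt_or_eq with hx | rfl
    · have hx' : x < vs.length := by omega
      exact ⟨vs[x], hvs _ (List.getElem_mem _), by rw [hν_lt x (by omega)]; simp [vals]⟩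
    · exact ⟨_, hwf.J_mem_val _, hν_n⟩
  · refine ⟨Equiv.refl ℕ, fun x hx => hν_gt x ?_⟩
    rw [LVar_calcRule] at hx
    simpa using hx
  · exact isLogical_calcRule_cond hwf hf.1
  · have hcond : (R.calcRule f).cond.subst ν = .app R.eqS [res, .app f vals] := by
      rw [← hlhs]; simp [calcRule, hν_n]
    rw [hcond, hwf.J_eq (hwf.isLogical_value (hwf.J_mem_val _)) hvals (by simp [Ground]) hvals']
    exact hwf.J_value (hwf.J_mem_val _)
  · exact ⟨f, _, rfl, hf.2⟩
  · rw [hlhs]; simp [calcRule, hν_n, vals, res]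

theorem exists_barPresentation_of_mem (hwf : R.WF) {lr : Term F × Term F} (h : lr ∈ barTRS R) :
    ∃ ρ ν, R.BarPresentation ρ ν ∧ lr = (ρ.lhs.subst ν, ρ.rhs.subst ν) := by
  rcases h with ⟨ρ, hρ, τ, hdom, hval, hvalid, rfl⟩ | ⟨f, hf, vs, hlen, hvs, rfl⟩
  · obtain ⟨⟨f, ts, hlhs, hf⟩, hcond⟩ := hwf.rules hρ
    have hground : Ground (ρ.cond.subst τ) :=
      ground_subst_of_isVal fun x hx => hval x (cond_vars_subset_LVar ρ hx)
    refine ⟨ρ, τ, ⟨⟨ρ, Or.inl hρ, IsVariantR.refl ρ⟩, hval, ⟨Equiv.refl ℕ, fun x hx => ?_⟩,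
      hcond, ?_, f, ts, hlhs, fun hv => hf.2 (hwf.val_subset hv)⟩, rfl⟩
    · by_contra hne
      exact hx (hdom ▸ hne)
    · simpa [Term.subst_of_varsList_eq_nil hground] using
        hvalid Term.var fun x hx => absurd (hground ▸ hx : x ∈ []) List.not_mem_nil
  · obtain ⟨ν, hν, heq⟩ := barPresentation_calcRule hwf hf hlen hvs
    exact ⟨_, ν, hν, heq.symm⟩

theorem exists_barPresentation_of_isVariantP (hwf : R.WF) {lr : Term F × Term F}
    (hlr : lr ∈ barTRS R) {l r : Term F} (hvar : IsVariantP lr (l, r)) :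
    ∃ ρ ν, R.BarPresentation ρ ν ∧ l = ρ.lhs.subst ν ∧ r = ρ.rhs.subst ν := by
  obtain ⟨ρ, ν, hν, rfl⟩ := exists_barPresentation_of_mem hwf hlr
  obtain ⟨π, hl, hr⟩ := hvar
  refine ⟨ρ.rename (Equiv.refl ℕ), _, hν.rename (Equiv.refl ℕ) π, ?_, ?_⟩
  · rw [Rule.rename, Term.rename_subst_rename]; exact hl
  · rw [Rule.rename, Term.rename_subst_rename]; exact hr

def ccpConstraint (R : LCTRS F) (ρ₁ ρ₂ : Rule F) (σ : ℕ → Term F) : Term F :=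
  R.conj (ρ₁.cond.subst σ) (R.conj (ρ₂.cond.subst σ) ((R.conj (R.EC ρ₁) (R.EC ρ₂)).subst σ))

theorem isVal_or_var_of_factor {σ Θ : ℕ → Term F} {x : ℕ} (hfac : (σ x).subst Θ = Θ x)
    (hx : R.isVal (Θ x)) : R.isVal (σ x) ∨ ∃ y, σ x = .var y := by
  obtain ⟨v, hv, hΘx⟩ := hx
  rcases Term.eq_var_or_eq_of_subst_eq_const (hfac.trans hΘx) with h | h
  · exact Or.inr h
  · exact Or.inl ⟨v, hv, h⟩

theorem isVal_of_mem_varsList_subst {σ Θ : ℕ → Term F} (hfac : ∀ x, (σ x).subst Θ = Θ x)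
    {w : Term F} (hw : ∀ z ∈ w.varsList, R.isVal (Θ z)) {x : ℕ}
    (hx : x ∈ (w.subst σ).varsList) : R.isVal (Θ x) := by
  obtain ⟨z, hz, hxz⟩ := Term.mem_varsList_subst.1 hx
  obtain ⟨v, hv, hΘz⟩ := hw z hz
  rcases Term.eq_var_or_eq_of_subst_eq_const ((hfac z).trans hΘz) with ⟨y, hy⟩ | hc
  · rw [hy, Term.varsList_var, List.mem_singleton] at hxz
    subst hxz
    exact ⟨v, hv, by rw [← hΘz, ← hfac z, hy, Term.subst_var]⟩
  · simp [hc] at hxz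

theorem respectsC_ccpConstraint (hwf : R.WF) {ρ₁ ρ₂ : Rule F} {σ Θ : ℕ → Term F}
    (hfac : ∀ x, (σ x).subst Θ = Θ x) (hval : ∀ x ∈ LVar ρ₁ ∪ LVar ρ₂, R.isVal (Θ x))
    (hc₁ : R.Holds (ρ₁.cond.subst Θ)) (hc₂ : R.Holds (ρ₂.cond.subst Θ)) :
    R.respectsC Θ (R.ccpConstraint ρ₁ ρ₂ σ) := by
  have hΘ : ∀ w : Term F, (w.subst σ).subst Θ = w.subst Θ := fun w => by
    rw [Term.subst_subst, funext hfac]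
  refine ⟨fun x hx => ?_, Holds.validC ?_⟩
  · simp only [ccpConstraint, Term.vars, Set.mem_ofPred_eq, varsList_conj, List.mem_append] at hx
    rcases hx with hx | hx | hx
    · exact isVal_of_mem_varsList_subst hfac
        (fun z hz => hval z (Or.inl (cond_vars_subset_LVar ρ₁ hz))) hx
    · exact isVal_of_mem_varsList_subst hfac
        (fun z hz => hval z (Or.inr (cond_vars_subset_LVar ρ₂ hz))) hx
    · refine isVal_of_mem_varsList_subst hfac (fun z hz => hval z ?_) hx
      rw [varsList_conj, List.mem_append] at hz
      exact hz.imp mem_LVar_of_mem_varsList_EC mem_LVar_of_mem_varsList_EC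
  · simp only [ccpConstraint, conj_subst, hΘ]
    exact hc₁.conj hwf (hc₂.conj hwf ((holds_EC_subst hwf fun x hx => hval x (Or.inl hx)).conj hwf
      (holds_EC_subst hwf fun x hx => hval x (Or.inr hx))))

theorem satC_conj_cond (hwf : R.WF) {ρ₁ ρ₂ : Rule F} {σ Θ : ℕ → Term F}
    (hfac : ∀ x, (σ x).subst Θ = Θ x) (hval : ∀ x ∈ LVar ρ₁ ∪ LVar ρ₂, R.isVal (Θ x))
    (hc₁ : R.Holds (ρ₁.cond.subst Θ)) (hc₂ : R.Holds (ρ₂.cond.subst Θ)) :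
    R.satC (R.conj (ρ₁.cond.subst σ) (ρ₂.cond.subst σ)) := by
  refine ⟨Θ, fun x hx => ?_, ?_⟩
  · simp only [Term.vars, Set.mem_ofPred_eq, varsList_conj, List.mem_append] at hx
    rcases hx with hx | hx
    · exact isVal_of_mem_varsList_subst hfac
        (fun z hz => hval z (Or.inl (cond_vars_subset_LVar ρ₁ hz))) hx
    · exact isVal_of_mem_varsList_subst hfac
        (fun z hz => hval z (Or.inr (cond_vars_subset_LVar ρ₂ hz))) hx
  · simp only [conj_subst, Term.subst_subst, funext hfac]
    exact (hc₁.conj hwf hc₂).2.2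

/-- At the root, an overlap of variants `ρ₁`, `ρ₂` with `Var(r₁) ⊆ Var(ℓ₁)` presents an overlap of
variants of `R̄`. -/
theorem not_isVariantR_or_not_subset {ρ₁ ρ₂ : Rule F} {ν₁ ν₂ Θ : ℕ → Term F}
    (h₁ : R.BarPresentation ρ₁ ν₁) (h₂ : R.BarPresentation ρ₂ ν₂)
    (hΘ₁ : ∀ x ∈ LVar ρ₁, Θ x = ν₁ x) (hΘ₂ : ∀ x ∈ LVar ρ₂, Θ x = ν₂ x)
    (huni : Unifies Θ ρ₁.lhs ρ₂.lhs)
    (hnot : ¬ IsVariantP (ρ₁.lhs.subst ν₁, ρ₁.rhs.subst ν₁) (ρ₂.lhs.subst ν₂, ρ₂.rhs.subst ν₂)) :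
    ¬ IsVariantR ρ₁ ρ₂ ∨ ¬ ρ₁.rhs.vars ⊆ ρ₁.lhs.vars := by
  refine not_and_or.1 fun ⟨hvar, hrhs⟩ => hnot ?_
  obtain ⟨κ, rfl⟩ := isVariantR_iff.1 hvar
  refine h₁.isVariantP h₂ hrhs fun x hx hL => ?_
  have hκ : Θ x = Θ (κ x) := by
    refine Term.eq_on_varsList_of_subst_eq (δ := fun y => Θ (κ y)) ?_ x hx
    rw [huni, Rule.rename, Term.rename_subst]
  rw [← hΘ₁ x hL, ← hΘ₂ (κ x) (by rw [LVar_rename]; exact ⟨x, hL, rfl⟩), hκ]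

theorem exists_ccp_of_barPresentations (hwf : R.WF) {ρ₁ ρ₂ : Rule F} {ν₁ ν₂ : ℕ → Term F}
    (h₁ : R.BarPresentation ρ₁ ν₁) (h₂ : R.BarPresentation ρ₂ ν₂)
    (hdisj : ruleVars ρ₁ ∩ ruleVars ρ₂ = ∅) {p : List ℕ} {σ : ℕ → Term F} {l2p s : Term F}
    (hsub : (ρ₂.lhs.subst ν₂).subtermAt p = some l2p) (hfun : l2p.isFun)
    (huni : Unifies σ (ρ₁.lhs.subst ν₁) l2p)
    (hroot : p = [] →
      ¬ IsVariantP (ρ₁.lhs.subst ν₁, ρ₁.rhs.subst ν₁) (ρ₂.lhs.subst ν₂, ρ₂.rhs.subst ν₂))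
    (hs : ((ρ₂.lhs.subst ν₂).subst σ).replaceAt p ((ρ₁.rhs.subst ν₁).subst σ) = some s) :
    ∃ s' t' φ' γ, IsCCPAt R p s' t' φ' ∧ s = s'.subst γ ∧
      (ρ₂.rhs.subst ν₂).subst σ = t'.subst γ ∧ R.respectsC γ φ' := by
  obtain ⟨Θ, hΘ₁, hΘ₂⟩ :=
    exists_eq_on_of_inter_eq_empty hdisj (fun y => (ν₁ y).subst σ) (fun y => (ν₂ y).subst σ)
  have hval : ∀ x ∈ LVar ρ₁ ∪ LVar ρ₂, R.isVal (Θ x) := by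
    rintro x (hx | hx)
    · exact h₁.eq_of_mem_LVar hΘ₁ x hx ▸ h₁.isVal x hx
    · exact h₂.eq_of_mem_LVar hΘ₂ x hx ▸ h₂.isVal x hx
  have hc₁ := h₁.holds_cond_of_eqOn hwf hΘ₁
  have hc₂ := h₂.holds_cond_of_eqOn hwf hΘ₂
  -- the overlap of `R̄` lifts to an overlap `u` of `ρ₁` and `ρ₂`, unified by `Θ`
  obtain ⟨u, hu, rfl⟩ := Term.exists_subtermAt_of_subtermAt_subst h₂.var_or_const hsub
  have huΘ : Unifies Θ ρ₁.lhs u := by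
    rw [Unifies, Term.subst_eq_subst_subst hΘ₁ (lhs_vars_subset_ruleVars ρ₁),
      Term.subst_eq_subst_subst hΘ₂ fun x hx =>
        lhs_vars_subset_ruleVars ρ₂ (Term.varsList_subset_of_subtermAt hu x hx)]
    exact huni
  obtain ⟨σ', hσ', hgen⟩ := exists_isIdemMGU_pair huΘ
  have hfac := hgen Θ huΘ
  have hΘσ' : ∀ w : Term F, (w.subst σ').subst Θ = w.subst Θ := fun w => by
    rw [Term.subst_subst, funext hfac]
  obtain ⟨s', hs'⟩ :=
    Term.exists_replaceAt_of_subtermAt (Term.subtermAt_subst σ' hu) (ρ₁.rhs.subst σ')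
  refine ⟨s', ρ₂.rhs.subst σ', R.ccpConstraint ρ₁ ρ₂ σ', Θ,
    ⟨ρ₁, ρ₂, σ', u, h₁.variant, h₂.variant, hdisj, hu, h₁.isFun_of_unifies h₂ hfun huni,
      ⟨hσ', fun θ hθ => ⟨θ, hgen θ hθ⟩⟩, fun x hx => isVal_or_var_of_factor (hfac x) (hval x hx),
      satC_conj_cond hwf hfac hval hc₁ hc₂, ?_, hs', rfl, rfl⟩,
    ?_, ?_, respectsC_ccpConstraint hwf hfac hval hc₁ hc₂⟩
  · rintro rfl
    obtain rfl : u = ρ₂.lhs := by simpa using hu.symm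
    exact not_isVariantR_or_not_subset h₁ h₂ (h₁.eq_of_mem_LVar hΘ₁) (h₂.eq_of_mem_LVar hΘ₂) huΘ
      (hroot rfl)
  · have := Term.replaceAt_subst Θ hs'
    rw [hΘσ', hΘσ', Term.subst_eq_subst_subst hΘ₂ (lhs_vars_subset_ruleVars ρ₂),
      Term.subst_eq_subst_subst hΘ₁ (rhs_vars_subset_ruleVars ρ₁), hs] at this
    exact Option.some_inj.1 this
  · rw [hΘσ', Term.subst_eq_subst_subst hΘ₂ (rhs_vars_subset_ruleVars ρ₂)]

end LCTRS

/-- For every critical pair `s ≈ t` of the transformed TRS `R̄`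
there exist a constrained critical pair `s′ ≈ t′ [φ′]` of the LCTRS `R` and a
substitution `γ` such that `s = s′γ`, `t = t′γ` and `γ ⊨ φ′`. -/
theorem cp_of_barTRS_from_ccp {F : Type} (R : LCTRS F) (hwf : R.WF) :
    ∀ (p : List ℕ) (s t : Term F), IsCPAt (barTRS R) p s t →
      ∃ (p' : List ℕ) (s' t' φ' : Term F) (γ : ℕ → Term F),
        IsCCPAt R p' s' t' φ' ∧ s = s'.subst γ ∧ t = t'.subst γ ∧ R.respectsC γ φ' := by
  rintro p s t ⟨l₁, r₁, l₂, r₂, σ, l2p, ⟨lr₁, hlr₁, hvar₁⟩, ⟨lr₂, hlr₂, hvar₂⟩, -, hsub, hfun,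
    ⟨huni, -⟩, hroot, hs, rfl⟩
  obtain ⟨ρ₁, ν₁, h₁, rfl, rfl⟩ := LCTRS.exists_barPresentation_of_isVariantP hwf hlr₁ hvar₁
  obtain ⟨ρ, ν, h, rfl, rfl⟩ := LCTRS.exists_barPresentation_of_isVariantP hwf hlr₂ hvar₂
  obtain ⟨ρ₂, ν₂, h₂, hdisj, hl₂, hr₂⟩ := h.exists_disjoint ρ₁
  rw [← hl₂] at hsub hroot hs
  rw [← hr₂] at hroot ⊢
  obtain ⟨s', t', φ', γ, hccp, hs', ht', hγ⟩ :=
    LCTRS.exists_ccp_of_barPresentations hwf h₁ h₂ hdisj hsub hfun huni hroot hs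
  exact ⟨p, s', t', φ', γ, hccp, hs', ht', hγ⟩

end LCT
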